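/- arXiv:1411.6097 — 3 statements merged into one kernel-verified Lean document; each statement's English description precedes it below -/
import Mathlib

section
/- Let α be a smooth 1-form on an open set U ⊆ J^k(E) and γ : I → ℝ^n a smooth curve whose k-th order lift lies in U. Then γ satisfies the variational principle of α if and only if for every closed subinterval [a,b] ⊆ I and every k-th order variational field W along γ^(k)|_[a,b] (i.e. W(t) = ∂/∂s|_{s=0} (γ^(s))^(k)(t) for some smooth variation F of γ|_[a,b] with fixed boundary up to order k, with γ^(s) := F(·,s)), one has ∫_a^b (dα)_{γ^(k)(t)}( W(t), (γ^(k))'(t) ) dt = 0. -/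
open Set Filter

noncomputable section

/-- The `k`-th order jet space `J^k(E)` of the trivial bundle `E = ℝ × ℝⁿ → ℝ`,
identified with `ℝ × (ℝⁿ)^(k+1)` via the adapted coordinates `(t, y_(0), …, y_(k))`. -/
abbrev Jet (n k : ℕ) : Type := ℝ × (Fin (k + 1) → Fin n → ℝ)

namespace Jet

variable {n k : ℕ}

/-- The 1-form `dt` (coordinate functional `t`). -/
def coT (n k : ℕ) : Jet n k →L[ℝ] ℝ := ContinuousLinearMap.fst ℝ ℝ (Fin (k + 1) → Fin n → ℝ)

/-- The 1-form `dy^i_(a)` (coordinate functional `y^i_(a)`). -/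
def coY (n k : ℕ) (a : Fin (k + 1)) (i : Fin n) : Jet n k →L[ℝ] ℝ :=
  ((ContinuousLinearMap.proj i : (Fin n → ℝ) →L[ℝ] ℝ).comp
      (ContinuousLinearMap.proj a : (Fin (k + 1) → Fin n → ℝ) →L[ℝ] (Fin n → ℝ))).comp
    (ContinuousLinearMap.snd ℝ ℝ (Fin (k + 1) → Fin n → ℝ))

/-- The coordinate tangent vector `∂/∂y^i_(a)`. -/
def eY (n k : ℕ) (a : Fin (k + 1)) (i : Fin n) : Jet n k :=
  (0, fun b j => if b = a ∧ j = i then 1 else 0)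

/-- The total-derivative vector field `d/dt = ∂/∂t + Σ_{a<k} y_(a+1) ∂/∂y_(a)`. -/
def dtVF (n k : ℕ) (u : Jet n k) : Jet n k :=
  (1, fun a i => if h : (a : ℕ) + 1 < k + 1 then u.2 ⟨(a : ℕ) + 1, h⟩ i else 0)

/-- Membership in the holonomic distribution `D` at the point `u`:
`D_u` is spanned by `d/dt|_u` and the top coordinate fields `∂/∂y^i_(k)`. -/
def InD (u v : Jet n k) : Prop :=
  ∃ (c : ℝ) (w : Fin n → ℝ), v = c • dtVF n k u + ∑ i, w i • eY n k (Fin.last k) i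

/-- 1-forms on the jet space. -/
abbrev Form1 (n k : ℕ) := Jet n k → Jet n k →L[ℝ] ℝ

/-- 2-forms on the jet space. -/
abbrev Form2 (n k : ℕ) := Jet n k → Jet n k →L[ℝ] Jet n k →L[ℝ] ℝ

/-- A holonomic 0-form (function) is one vanishing identically. -/
def Hol0 (f : Jet n k → ℝ) (U : Set (Jet n k)) : Prop := ∀ u ∈ U, f u = 0

/-- A holonomic 1-form: its contraction with every `D`-valued vector vanishes. -/
def Hol1 (α : Form1 n k) (U : Set (Jet n k)) : Prop := ∀ u ∈ U, ∀ v, InD u v → α u v = 0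

/-- A holonomic 2-form: its contraction with every `D`-valued vector vanishes. -/
def Hol2 (σ : Form2 n k) (U : Set (Jet n k)) : Prop := ∀ u ∈ U, ∀ v, InD u v → σ u v = 0

/-- Exterior differential of a 1-form: `dα(v,w) = D_vα(w) − D_wα(v)`. -/
def extd (α : Form1 n k) : Form2 n k := fun u => fderiv ℝ α u - (fderiv ℝ α u).flip

/-- Lie bracket of vector fields. -/
def lie (X Y : Jet n k → Jet n k) (u : Jet n k) : Jet n k :=
  fderiv ℝ Y u (X u) - fderiv ℝ X u (Y u)

/-- Lie derivative of a 1-form along a vector field. -/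
def lieD (X : Jet n k → Jet n k) (α : Form1 n k) : Form1 n k :=
  fun u => fderiv ℝ α u (X u) + (α u).comp (fderiv ℝ X u)

/-- Wedge product of two 1-forms. -/
def wedge {E : Type*} [NormedAddCommGroup E] [NormedSpace ℝ E] (β η : E →L[ℝ] ℝ) :
    E →L[ℝ] E →L[ℝ] ℝ :=
  β.smulRight η - η.smulRight β

/-- The contact (holonomic) forms `ω^i_(a) = dy^i_(a) − y^i_(a+1) dt`, `0 ≤ a ≤ k−1`. -/
def contact (n k : ℕ) (a : Fin k) (i : Fin n) (u : Jet n k) : Jet n k →L[ℝ] ℝ :=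
  coY n k a.castSucc i - u.2 a.succ i • coT n k

/-- A source form: an (antisymmetric) 2-form whose contraction with every vector field with
vanishing components along `∂/∂t` and all the `∂/∂y^i_(0)` is zero. -/
def SourceForm (σ : Form2 n k) (U : Set (Jet n k)) : Prop :=
  (∀ u ∈ U, ∀ v w, σ u v w = -σ u w v) ∧
  (∀ u ∈ U, ∀ v : Jet n k, v.1 = 0 → v.2 0 = 0 → σ u v = 0)

/-- The canonical projection `J^k(E) → J^r(E)`, as a continuous linear map. -/
def projL (n : ℕ) {r k : ℕ} (h : r ≤ k) : Jet n k →L[ℝ] Jet n r :=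
  LinearMap.toContinuousLinearMap
    ((LinearMap.id : ℝ →ₗ[ℝ] ℝ).prodMap
      (LinearMap.funLeft ℝ (Fin n → ℝ) (Fin.castLE (Nat.succ_le_succ h))))

/-- Pullback of a 1-form on `J^r(E)` to `J^k(E)`. -/
def pull1 (n : ℕ) {r k : ℕ} (h : r ≤ k) (β : Form1 n r) : Form1 n k :=
  fun u => (β (projL n h u)).comp (projL n h)

/-- Two 1-forms are variationally equivalent on `U` if their difference is
(holonomic 1-form) + d(holonomic 0-form). -/
def VarEquiv1 (α α' : Form1 n k) (U : Set (Jet n k)) : Prop :=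
  ∃ (lam : Form1 n k) (mu : Jet n k → ℝ),
    Hol1 lam U ∧ Hol0 mu U ∧ ∀ u ∈ U, α u - α' u = lam u + fderiv ℝ mu u

/-- Two 2-forms are variationally equivalent on `U` if their difference is
(holonomic 2-form) + d(holonomic 1-form). -/
def VarEquiv2 (σ σ' : Form2 n k) (U : Set (Jet n k)) : Prop :=
  ∃ (lam : Form2 n k) (mu : Form1 n k),
    Hol2 lam U ∧ Hol1 mu U ∧ ∀ u ∈ U, σ u - σ' u = lam u + extd mu u

/-- The `k`-th order lift `γ^(k)(t) = (t, γ(t), γ'(t), …, γ^(k)(t))` of a curve. -/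
def lift (n k : ℕ) (γ : ℝ → Fin n → ℝ) (t : ℝ) : Jet n k :=
  (t, fun a => iteratedDeriv (a : ℕ) γ t)

/-- The action `I_α(γ; a, b) = ∫_a^b α_{γ^(k)(t)}((γ^(k))'(t)) dt`. -/
def action (α : Form1 n k) (γ : ℝ → Fin n → ℝ) (a b : ℝ) : ℝ :=
  ∫ t in a..b, α (lift n k γ t) (deriv (lift n k γ) t)

/-- A smooth variation of `γ` on `[a,b]` with fixed boundary up to order `k`. -/
structure IsVariation (n k : ℕ) (γ : ℝ → Fin n → ℝ) (a b : ℝ) (F : ℝ → ℝ → Fin n → ℝ) :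
    Prop where
  smooth : ContDiff ℝ (⊤ : ℕ∞) (fun p : ℝ × ℝ => F p.1 p.2)
  init : ∀ t, F t 0 = γ t
  fix_a : ∀ s, lift n k (fun t => F t s) a = lift n k γ a
  fix_b : ∀ s, lift n k (fun t => F t s) b = lift n k γ b

/-- `γ` satisfies the variational principle of `α` (a 1-form on `U`) on the interval `I`. -/
def SatisfiesVP (α : Form1 n k) (U : Set (Jet n k)) (γ : ℝ → Fin n → ℝ) (I : Set ℝ) : Prop :=
  ∀ a b : ℝ, a ≤ b → Set.Icc a b ⊆ I → ∀ F, IsVariation n k γ a b F →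
    (∀ s t, t ∈ Set.Icc a b → lift n k (fun t' => F t' s) t ∈ U) →
    deriv (fun s => action α (fun t => F t s) a b) 0 = 0

/-- Total derivative of a function on the jet space. -/
def tderiv (g : Jet n k → ℝ) : Jet n k → ℝ := fun u => fderiv ℝ g u (dtVF n k u)

/-- The vector field `X_v` associated with `v = (v⁰, vⁱ)`:
`X_v = v⁰ d/dt + Σ_{a=0}^{k} (d/dt)^a (vⁱ − y^i_(1) v⁰) ∂/∂y^i_(a)` (with `y_(k+1) = 0`). -/
def Xv (v0 : Jet n k → ℝ) (vi : Jet n k → Fin n → ℝ) (u : Jet n k) : Jet n k :=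
  v0 u • dtVF n k u +
    ∑ a : Fin (k + 1), ∑ i : Fin n,
      (tderiv^[(a : ℕ)] (fun w => vi w i - w.2 1 i * v0 w) u) • eY n k a i

/-- `X` is a `D`-symmetry on `U`: `[X, Y]` is `D`-valued for every `D`-valued `Y`. -/
def IsDSymm (X : Jet n k → Jet n k) (U : Set (Jet n k)) : Prop :=
  ∀ Y : Jet n k → Jet n k, ContDiffOn ℝ (⊤ : ℕ∞) Y U → (∀ u ∈ U, InD u (Y u)) →
    ∀ u ∈ U, InD u (lie X Y u)

/-- `X` is an infinitesimal symmetry for the action of `α` on `U`: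
it is a `D`-symmetry and `L_X α` is holonomic. -/
def IsSymm (α : Form1 n k) (X : Jet n k → Jet n k) (U : Set (Jet n k)) : Prop :=
  IsDSymm X U ∧ Hol1 (lieD X α) U

/-- `f` is a constant of motion (with domain `W`) for the variational principle of `α`
(with domain `Uα`). -/
def IsConstMot (α : Form1 n k) (Uα W : Set (Jet n k)) (f : Jet n k → ℝ) : Prop :=
  ∀ γ : ℝ → Fin n → ℝ, ContDiff ℝ (⊤ : ℕ∞) γ → ∀ I : Set ℝ, IsOpen I → I.OrdConnected →
    (∀ t ∈ I, lift n k γ t ∈ Uα) → (∀ t ∈ I, lift n k γ t ∈ W) →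
    SatisfiesVP α Uα γ I →
    ∀ t₁ ∈ I, ∀ t₂ ∈ I, f (lift n k γ t₁) = f (lift n k γ t₂)

end Jet


section FirstVariation

open MeasureTheory intervalIntegral

lemma liftSmooth {n k : ℕ} {F : ℝ → ℝ → Fin n → ℝ}
    (hF : ContDiff ℝ (⊤ : ℕ∞) (fun p : ℝ × ℝ => F p.1 p.2)) :
    ContDiff ℝ (⊤ : ℕ∞) (fun p : ℝ × ℝ => Jet.lift n k (fun t => F t p.2) p.1) := by
  have key : ∀ a : ℕ, ContDiff ℝ (⊤ : ℕ∞) (fun p : ℝ × ℝ => iteratedDeriv a (fun t => F t p.2) p.1) := by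
    intro a
    induction a with
    | zero => simpa [iteratedDeriv_zero] using hF
    | succ a ih =>
      have h1 : ContDiff ℝ (⊤ : ℕ∞) (fun q : (ℝ × ℝ) × ℝ =>
          iteratedDeriv a (fun t => F t q.1.2) q.2) :=
        ih.comp (contDiff_snd.prodMk (contDiff_snd.comp contDiff_fst))
      have h2 := ContDiff.fderiv_apply (n := ((⊤ : ℕ∞) : WithTop ℕ∞))
        (f := fun (p : ℝ × ℝ) (t : ℝ) => iteratedDeriv a (fun t' => F t' p.2) t)
        (g := fun p : ℝ × ℝ => p.1) (k := fun _ => (1:ℝ))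
        h1 contDiff_fst contDiff_const (by exact_mod_cast le_top)
      have h3 : (fun p : ℝ × ℝ => iteratedDeriv (a+1) (fun t => F t p.2) p.1)
          = fun p : ℝ × ℝ => fderiv ℝ (fun t => iteratedDeriv a (fun t' => F t' p.2) t) p.1 1 := by
        funext p
        rw [iteratedDeriv_succ, ← fderiv_apply_one_eq_deriv]
      rw [h3]
      exact h2
  exact contDiff_fst.prodMk (contDiff_pi.2 fun a => key a)

lemma firstVariation {n k : ℕ} {U : Set (Jet n k)} (hU : IsOpen U)
    {α : Jet.Form1 n k} (hα : ContDiffOn ℝ (⊤ : ℕ∞) α U)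
    {γ : ℝ → Fin n → ℝ} {a b : ℝ} (hab : a ≤ b) {F : ℝ → ℝ → Fin n → ℝ}
    (hF : Jet.IsVariation n k γ a b F) {ε : ℝ} (hε : 0 < ε)
    (hmem : ∀ t ∈ Set.Icc a b, ∀ s : ℝ, |s| < ε → Jet.lift n k (fun t' => F t' s) t ∈ U) :
    HasDerivAt (fun s => Jet.action α (fun t => F t s) a b)
      (∫ t in a..b, Jet.extd α (Jet.lift n k γ t)
        (deriv (fun s => Jet.lift n k (fun t' => F t' s) t) 0)
        (deriv (Jet.lift n k γ) t)) 0 := by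
  set P : ℝ × ℝ → Jet n k := fun p => Jet.lift n k (fun t' => F t' p.2) p.1 with hPdef
  have hP : ContDiff ℝ (⊤ : ℕ∞) P := liftSmooth hF.smooth
  set fP : ℝ × ℝ → (ℝ × ℝ) →L[ℝ] Jet n k := fderiv ℝ P with hfPdef
  set fP2 := fderiv ℝ fP with hfP2def
  have hPd : ∀ p, HasFDerivAt P (fP p) p := fun p => (hP.differentiable (by simp) p).hasFDerivAt
  have hfPd : ∀ p, HasFDerivAt fP (fP2 p) p := fun p =>
    (((hP.fderiv_right (m := ((⊤ : ℕ∞) : WithTop ℕ∞)) (by exact_mod_cast le_top)).differentiable (by simp)) p).hasFDerivAt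
  set d1 : ℝ × ℝ → Jet n k := fun p => fP p (1, 0) with hd1def
  set d2 : ℝ × ℝ → Jet n k := fun p => fP p (0, 1) with hd2def
  have hD1 : ∀ t s : ℝ, HasDerivAt (fun t' => P (t', s)) (d1 (t, s)) t := by
    intro t s
    have h1 : HasDerivAt (fun t' : ℝ => ((t', s) : ℝ × ℝ)) (1, 0) t :=
      (hasDerivAt_id t).prodMk (hasDerivAt_const t s)
    exact (hPd (t, s)).comp_hasDerivAt t h1
  have hD2 : ∀ t s : ℝ, HasDerivAt (fun s' => P (t, s')) (d2 (t, s)) s := by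
    intro t s
    have h1 : HasDerivAt (fun s' : ℝ => ((t, s') : ℝ × ℝ)) (0, 1) s :=
      (hasDerivAt_const s t).prodMk (hasDerivAt_id s)
    exact (hPd (t, s)).comp_hasDerivAt s h1
  have hmem' : ∀ p : ℝ × ℝ, p.1 ∈ Set.Icc a b → |p.2| < ε → P p ∈ U := fun p h1 h2 =>
    hmem p.1 h1 p.2 h2
  have hsymm : ∀ p, fP2 p (0, 1) (1, 0) = fP2 p (1, 0) (0, 1) := fun p =>
    second_derivative_symmetric (fun y => hPd y) (hfPd p) _ _
  set Φ : ℝ × ℝ → ℝ :=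
    fun p => α (P p) (fP2 p (0, 1) (1, 0)) + fderiv ℝ α (P p) (d2 p) (d1 p) with hΦdef
  set Ψ : ℝ × ℝ → ℝ :=
    fun p => α (P p) (fP2 p (1, 0) (0, 1)) + fderiv ℝ α (P p) (d1 p) (d2 p) with hΨdef
  have hsder : ∀ t x : ℝ, P (t, x) ∈ U →
      HasDerivAt (fun s => α (P (t, s)) (d1 (t, s))) (Φ (t, x)) x := by
    intro t x hp
    have hαat : HasFDerivAt α (fderiv ℝ α (P (t, x))) (P (t, x)) :=
      ((hα.contDiffAt (hU.mem_nhds hp)).differentiableAt (by simp)).hasFDerivAt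
    have hA : HasFDerivAt (fun q => α (P q)) ((fderiv ℝ α (P (t, x))).comp (fP (t, x))) (t, x) :=
      hαat.comp (t, x) (hPd (t, x))
    have hd1' : HasFDerivAt d1 ((fP2 (t, x)).flip (1, 0)) (t, x) := by
      have h := (hfPd (t, x)).clm_apply (hasFDerivAt_const ((1 : ℝ), (0 : ℝ)) (t, x))
      simpa using h
    have hh := hA.clm_apply hd1'
    have hcurve : HasDerivAt (fun s : ℝ => ((t, s) : ℝ × ℝ)) (0, 1) x :=
      (hasDerivAt_const x t).prodMk (hasDerivAt_id x)
    have hDD := hh.comp_hasDerivAt x hcurve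
    exact hDD
  have hcder : ∀ t : ℝ, P (t, 0) ∈ U →
      HasDerivAt (fun t' => α (P (t', 0)) (d2 (t', 0))) (Ψ (t, 0)) t := by
    intro t hp
    have hαat : HasFDerivAt α (fderiv ℝ α (P (t, 0))) (P (t, 0)) :=
      ((hα.contDiffAt (hU.mem_nhds hp)).differentiableAt (by simp)).hasFDerivAt
    have hA : HasFDerivAt (fun q => α (P q)) ((fderiv ℝ α (P (t, 0))).comp (fP (t, 0))) (t, 0) :=
      hαat.comp (t, 0) (hPd (t, 0))
    have hd2' : HasFDerivAt d2 ((fP2 (t, 0)).flip (0, 1)) (t, 0) := by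
      have h := (hfPd (t, 0)).clm_apply (hasFDerivAt_const ((0 : ℝ), (1 : ℝ)) (t, 0))
      simpa using h
    have hh := hA.clm_apply hd2'
    have hcurve : HasDerivAt (fun t' : ℝ => ((t', 0) : ℝ × ℝ)) (1, 0) t :=
      (hasDerivAt_id t).prodMk (hasDerivAt_const t 0)
    have hDD := hh.comp_hasDerivAt t hcurve
    exact hDD
  -- continuity facts
  have hfPsm : ContDiff ℝ (⊤ : ℕ∞) fP := hP.fderiv_right (m := ((⊤ : ℕ∞) : WithTop ℕ∞)) (by simp)
  have hfPcont : Continuous fP := hfPsm.continuous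
  have hfP2cont : Continuous fP2 :=
    (hfPsm.fderiv_right (m := ((⊤ : ℕ∞) : WithTop ℕ∞)) (by simp)).continuous
  have hd1c : Continuous d1 := hfPcont.clm_apply continuous_const
  have hd2c : Continuous d2 := hfPcont.clm_apply continuous_const
  have hαPc : ContinuousOn (fun p => α (P p)) (P ⁻¹' U) :=
    hα.continuousOn.comp hP.continuous.continuousOn (fun p hp => hp)
  have hfαPc : ContinuousOn (fun p => fderiv ℝ α (P p)) (P ⁻¹' U) :=
    (hα.continuousOn_fderiv_of_isOpen hU (by simp)).comp hP.continuous.continuousOn (fun p hp => hp)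
  have hΦc : ContinuousOn Φ (P ⁻¹' U) := by
    apply ContinuousOn.add
    · exact hαPc.clm_apply ((hfP2cont.clm_apply continuous_const).clm_apply
        continuous_const).continuousOn
    · exact (hfαPc.clm_apply hd2c.continuousOn).clm_apply hd1c.continuousOn
  have hΨc : ContinuousOn Ψ (P ⁻¹' U) := by
    apply ContinuousOn.add
    · exact hαPc.clm_apply ((hfP2cont.clm_apply continuous_const).clm_apply
        continuous_const).continuousOn
    · exact (hfαPc.clm_apply hd1c.continuousOn).clm_apply hd2c.continuousOn
  -- the compact tube and bound
  set ε' : ℝ := ε / 2 with hε'def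
  have hε' : 0 < ε' := half_pos hε
  have hKV : (Set.Icc a b ×ˢ Set.Icc (-ε') ε') ⊆ P ⁻¹' U := by
    rintro ⟨t, x⟩ ⟨h1, h2⟩
    exact hmem' (t, x) h1 (lt_of_le_of_lt (abs_le.2 ⟨h2.1, h2.2⟩) (half_lt_self hε))
  obtain ⟨C, hC⟩ := (isCompact_Icc.prod isCompact_Icc).exists_bound_of_continuousOn
    (hΦc.mono hKV)
  have hIsub : Set.uIoc a b ⊆ Set.Icc a b := by
    rw [Set.uIoc_of_le hab]; exact Set.Ioc_subset_Icc_self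
  have hIccU : ∀ t ∈ Set.Icc a b, P (t, 0) ∈ U := fun t ht =>
    hmem' (t, 0) ht (by simpa using hε)
  have hcont1 : ∀ x : ℝ, |x| < ε →
      ContinuousOn (fun t => α (P (t, x)) (d1 (t, x))) (Set.Icc a b) := by
    intro x hx
    have hcx : Continuous (fun t : ℝ => ((t, x) : ℝ × ℝ)) := continuous_id.prodMk continuous_const
    apply ContinuousOn.clm_apply
    · exact hαPc.comp hcx.continuousOn (fun t ht => hmem' (t, x) ht hx)
    · exact (hd1c.comp hcx).continuousOn
  -- differentiate under the integral sign
  have hdom := intervalIntegral.hasDerivAt_integral_of_dominated_loc_of_deriv_le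
    (F := fun x t => α (P (t, x)) (d1 (t, x))) (F' := fun x t => Φ (t, x))
    (bound := fun _ => C) (a := a) (b := b) (x₀ := (0:ℝ)) (μ := volume) (Metric.ball_mem_nhds (0:ℝ) hε')
    ?_ ?_ ?_ ?_ ?_ ?_
  · obtain ⟨hΦint, hMain⟩ := hdom
    -- identify the function being differentiated
    have hfun : (fun s => Jet.action α (fun t => F t s) a b)
        = fun x => ∫ t in a..b, α (P (t, x)) (d1 (t, x)) := by
      funext s
      unfold Jet.action
      congr 1
      funext t
      have hd : deriv (Jet.lift n k (fun t' => F t' s)) t = d1 (t, s) := (hD1 t s).deriv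
      rw [hd]
    -- identify the value of the derivative
    have hliftγ : Jet.lift n k γ = fun t => P (t, 0) := by
      have hγF : (fun t' => F t' 0) = γ := funext hF.init
      funext t
      rw [hPdef]
      simp only
      rw [hγF]
    have hder2 : ∀ t : ℝ, deriv (fun s => Jet.lift n k (fun t' => F t' s) t) 0 = d2 (t, 0) :=
      fun t => (hD2 t 0).deriv
    have hEq : ∀ t : ℝ, (Jet.extd α (Jet.lift n k γ t)
          (deriv (fun s => Jet.lift n k (fun t' => F t' s) t) 0) (deriv (Jet.lift n k γ) t))
        = Φ (t, 0) - Ψ (t, 0) := by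
      intro t
      rw [hliftγ, hder2]
      have hd : deriv (fun t' => P (t', 0)) t = d1 (t, 0) := (hD1 t 0).deriv
      rw [hd]
      simp only [hΦdef, hΨdef, Jet.extd, ContinuousLinearMap.sub_apply,
        ContinuousLinearMap.flip_apply, hsymm (t, 0)]
      ring
    -- boundary terms vanish
    have hdza : d2 (a, 0) = 0 := by
      have hconst : (fun s => P (a, s)) = fun _ => Jet.lift n k γ a := by
        funext s
        rw [hPdef]
        exact hF.fix_a s
      have h0 : HasDerivAt (fun s => P (a, s)) 0 0 := by
        rw [hconst]; exact hasDerivAt_const 0 _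
      exact (hD2 a 0).unique h0
    have hdzb : d2 (b, 0) = 0 := by
      have hconst : (fun s => P (b, s)) = fun _ => Jet.lift n k γ b := by
        funext s
        rw [hPdef]
        exact hF.fix_b s
      have h0 : HasDerivAt (fun s => P (b, s)) 0 0 := by
        rw [hconst]; exact hasDerivAt_const 0 _
      exact (hD2 b 0).unique h0
    -- integral of Ψ(·,0) over [a,b] vanishes
    have hΨint : IntervalIntegrable (fun t => Ψ (t, 0)) volume a b := by
      apply ContinuousOn.intervalIntegrable
      rw [Set.uIcc_of_le hab]
      have hcx : Continuous (fun t : ℝ => ((t, 0) : ℝ × ℝ)) := continuous_id.prodMk continuous_const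
      exact hΨc.comp hcx.continuousOn (fun t ht => hIccU t ht)
    have hΨ0 : (∫ t in a..b, Ψ (t, 0)) = 0 := by
      have h1 : (∫ t in a..b, Ψ (t, 0))
          = α (P (b, 0)) (d2 (b, 0)) - α (P (a, 0)) (d2 (a, 0)) := by
        apply intervalIntegral.integral_eq_sub_of_hasDerivAt
        · intro t ht
          rw [Set.uIcc_of_le hab] at ht
          exact hcder t (hIccU t ht)
        · exact hΨint
      rw [h1, hdza, hdzb]
      simp
    -- assemble
    rw [hfun]
    have hval : (∫ t in a..b, Jet.extd α (Jet.lift n k γ t)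
          (deriv (fun s => Jet.lift n k (fun t' => F t' s) t) 0) (deriv (Jet.lift n k γ) t))
        = ∫ t in a..b, Φ (t, 0) := by
      have h2 : (∫ t in a..b, Jet.extd α (Jet.lift n k γ t)
            (deriv (fun s => Jet.lift n k (fun t' => F t' s) t) 0) (deriv (Jet.lift n k γ) t))
          = ∫ t in a..b, (Φ (t, 0) - Ψ (t, 0)) := by
        congr 1
        funext t
        exact hEq t
      rw [h2, intervalIntegral.integral_sub hΦint hΨint, hΨ0, sub_zero]
    rw [hval]
    exact hMain
  · filter_upwards [Metric.ball_mem_nhds (0:ℝ) hε'] with x hx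
    have hx' : |x| < ε := by
      rw [Metric.mem_ball, Real.dist_eq, sub_zero] at hx
      exact lt_of_lt_of_le hx (le_of_lt (half_lt_self hε))
    exact (((hcont1 x hx').mono hIsub)).aestronglyMeasurable measurableSet_uIoc
  · apply ContinuousOn.intervalIntegrable
    rw [Set.uIcc_of_le hab]
    exact hcont1 0 (by simpa using hε)
  · have hcx : Continuous (fun t : ℝ => ((t, 0) : ℝ × ℝ)) := continuous_id.prodMk continuous_const
    exact ((hΦc.comp hcx.continuousOn (fun t ht => hIccU t ht)).mono hIsub).aestronglyMeasurable
      measurableSet_uIoc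
  · apply MeasureTheory.ae_of_all
    intro t ht x hx
    apply hC
    refine ⟨hIsub ht, ?_⟩
    rw [Metric.mem_ball, Real.dist_eq, sub_zero] at hx
    exact abs_le.1 (le_of_lt hx)
  · exact intervalIntegrable_const
  · apply MeasureTheory.ae_of_all
    intro t ht x hx
    rw [Metric.mem_ball, Real.dist_eq, sub_zero] at hx
    exact hsder t x (hmem' (t, x) (hIsub ht) (lt_of_lt_of_le hx (le_of_lt (half_lt_self hε))))

end FirstVariation

/-- A curve `γ` satisfies the variational principle of a 1-form `α` on
`U ⊆ J^k(E)` iff for every `[a,b] ⊆ I` and every `k`-th order variational field `W` along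
`γ^(k)|_[a,b]` (arising from a smooth variation with fixed boundary up to order `k`),
`∫_a^b dα_{γ^(k)(t)}(W(t), (γ^(k))'(t)) dt = 0`. -/
theorem stmt0 (n k : ℕ) (U : Set (Jet n k)) (hU : IsOpen U)
    (α : Jet.Form1 n k) (hα : ContDiffOn ℝ (⊤ : ℕ∞) α U)
    (γ : ℝ → Fin n → ℝ) (hγ : ContDiff ℝ (⊤ : ℕ∞) γ)
    (I : Set ℝ) (hIo : IsOpen I) (hIc : I.OrdConnected)
    (hlift : ∀ t ∈ I, Jet.lift n k γ t ∈ U) :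
    Jet.SatisfiesVP α U γ I ↔
      ∀ a b : ℝ, a ≤ b → Set.Icc a b ⊆ I →
        ∀ F, Jet.IsVariation n k γ a b F →
          ∫ t in a..b,
            Jet.extd α (Jet.lift n k γ t)
              (deriv (fun s => Jet.lift n k (fun t' => F t' s) t) 0)
              (deriv (Jet.lift n k γ) t) = 0  := by
  constructor
  · intro hVP a b hab hsub F hF
    have hγF : (fun t' => F t' 0) = γ := funext hF.init
    have hL : ContDiff ℝ (⊤ : ℕ∞) (fun p : ℝ × ℝ => Jet.lift n k (fun t => F t p.2) p.1) :=
      liftSmooth hF.smooth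
    have hV : IsOpen ((fun p : ℝ × ℝ => Jet.lift n k (fun t => F t p.2) p.1) ⁻¹' U) :=
      hU.preimage hL.continuous
    have hsub' : Set.Icc a b ×ˢ ({0} : Set ℝ) ⊆
        (fun p : ℝ × ℝ => Jet.lift n k (fun t => F t p.2) p.1) ⁻¹' U := by
      rintro ⟨t, s⟩ ⟨ht, hs⟩
      simp only [Set.mem_singleton_iff] at hs
      subst hs
      show Jet.lift n k (fun t' => F t' 0) t ∈ U
      rw [hγF]
      exact hlift t (hsub ht)
    obtain ⟨u, v, hu, hv, huI, hv0, huv⟩ :=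
      generalized_tube_lemma isCompact_Icc isCompact_singleton hV hsub'
    obtain ⟨ε, hε, hball⟩ := Metric.isOpen_iff.1 hv 0 (hv0 rfl)
    have hmem : ∀ t ∈ Set.Icc a b, ∀ s : ℝ, |s| < ε → Jet.lift n k (fun t' => F t' s) t ∈ U := by
      intro t ht s hs
      refine huv (⟨huI ht, hball ?_⟩ : ((t, s) : ℝ × ℝ) ∈ u ×ˢ v)
      rw [Metric.mem_ball, Real.dist_eq, sub_zero]
      exact hs
    have hkey := firstVariation hU hα hab hF hε hmem
    set φ : ℝ → ℝ := fun s => (ε / 2) * Real.sin s with hφdef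
    have hφ0 : φ 0 = 0 := by simp [hφdef]
    have hφd : HasDerivAt φ (ε / 2) 0 := by
      have h := (Real.hasDerivAt_sin 0).const_mul (ε / 2)
      simpa using h
    have hφsm : ContDiff ℝ (⊤ : ℕ∞) φ := contDiff_const.mul Real.contDiff_sin
    have hφlt : ∀ s, |φ s| < ε := by
      intro s
      have h1 : |φ s| ≤ ε / 2 := by
        rw [hφdef]
        simp only
        rw [abs_mul, abs_of_nonneg (le_of_lt (half_pos hε))]
        exact mul_le_of_le_one_right (le_of_lt (half_pos hε))
          (abs_le.2 ⟨Real.neg_one_le_sin s, Real.sin_le_one s⟩)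
      exact lt_of_le_of_lt h1 (half_lt_self hε)
    set F2 : ℝ → ℝ → Fin n → ℝ := fun t s => F t (φ s) with hF2def
    have hvar : Jet.IsVariation n k γ a b F2 := by
      constructor
      · exact hF.smooth.comp (contDiff_fst.prodMk (hφsm.comp contDiff_snd))
      · intro t
        show F t (φ 0) = γ t
        rw [hφ0]
        exact hF.init t
      · intro s
        exact hF.fix_a (φ s)
      · intro s
        exact hF.fix_b (φ s)
    have hmem2 : ∀ s : ℝ, ∀ t, t ∈ Set.Icc a b → Jet.lift n k (fun t' => F2 t' s) t ∈ U :=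
      fun s t ht => hmem t ht (φ s) (hφlt s)
    have hVP2 := hVP a b hab hsub F2 hvar hmem2
    have hkey' : HasDerivAt (fun s => Jet.action α (fun t => F t s) a b)
        (∫ t in a..b, Jet.extd α (Jet.lift n k γ t)
          (deriv (fun s => Jet.lift n k (fun t' => F t' s) t) 0)
          (deriv (Jet.lift n k γ) t)) (φ 0) := by
      rw [hφ0]
      exact hkey
    have hcomp : HasDerivAt (fun s => Jet.action α (fun t => F2 t s) a b)
        ((∫ t in a..b, Jet.extd α (Jet.lift n k γ t)
          (deriv (fun s => Jet.lift n k (fun t' => F t' s) t) 0)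
          (deriv (Jet.lift n k γ) t)) * (ε / 2)) 0 := hkey'.comp 0 hφd
    rw [hcomp.deriv] at hVP2
    rcases mul_eq_zero.1 hVP2 with h | h
    · exact h
    · exact absurd h (ne_of_gt (half_pos hε))
  · intro hInt a b hab hsub F hF hmemU
    have hmem : ∀ t ∈ Set.Icc a b, ∀ s : ℝ, |s| < (1 : ℝ) → Jet.lift n k (fun t' => F t' s) t ∈ U :=
      fun t ht s _ => hmemU s t ht
    have hkey := firstVariation hU hα hab hF one_pos hmem
    rw [hkey.deriv]
    exact hInt a b hab hsub F hF
end
end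

section
/- Let k ≥ 2 and let L be a smooth function on J^k(E) of order 1 (depending only on (t, y_(0), y_(1))), and set α = L dt. A smooth curve γ : I → ℝ^n satisfies the variational principle of α if and only if γ satisfies the Euler–Lagrange equations: for every t ∈ I and every i, ∂L/∂y^i(t, γ(t), γ'(t)) − d/dt[ ∂L/∂y^i_(1)(t, γ(t), γ'(t)) ] = 0. -/
open Set Filter

noncomputable section

section JetAux
open Jet Polynomial intervalIntegral MeasureTheory

variable {n k : ℕ}

theorem contDiff_deriv' {F : Type*} [NormedAddCommGroup F] [NormedSpace ℝ F]
    {f : ℝ → F} (hf : ContDiff ℝ (⊤ : ℕ∞) f) : ContDiff ℝ (⊤ : ℕ∞) (deriv f) := by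
  have : deriv f = fun x => fderiv ℝ f x 1 := by funext x; rw [fderiv_apply_one_eq_deriv]
  rw [this]; exact (hf.fderiv_right le_rfl).clm_apply contDiff_const

theorem contDiff_iteratedDeriv' {F : Type*} [NormedAddCommGroup F] [NormedSpace ℝ F]
    (m : ℕ) {f : ℝ → F} (hf : ContDiff ℝ (⊤ : ℕ∞) f) : ContDiff ℝ (⊤ : ℕ∞) (iteratedDeriv m f) := by
  induction m generalizing f with
  | zero => simpa using hf
  | succ m ih => rw [iteratedDeriv_succ']; exact ih (contDiff_deriv' hf)

theorem contDiff_lift {γ : ℝ → Fin n → ℝ} (hγ : ContDiff ℝ (⊤ : ℕ∞) γ) :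
    ContDiff ℝ (⊤ : ℕ∞) (lift n k γ) :=
  contDiff_id.prodMk (contDiff_pi.2 fun _ => contDiff_iteratedDeriv' _ hγ)

theorem projL_lift (h1 : 1 ≤ k) (γ : ℝ → Fin n → ℝ) (t : ℝ) :
    projL n h1 (lift n k γ t) = lift n 1 γ t := by
  unfold projL lift
  exact Prod.ext rfl (by funext a; simp [LinearMap.funLeft_apply])

theorem hasDerivAt_partial2 {E : Type*} [NormedAddCommGroup E] [NormedSpace ℝ E]
    (u : ℝ × ℝ → E) (hu : Differentiable ℝ u) (t s : ℝ) :
    HasDerivAt (fun s' => u (t, s')) (fderiv ℝ u (t, s) (0, 1)) s :=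
  (hu (t, s)).hasFDerivAt.comp_hasDerivAt s ((hasDerivAt_const s t).prodMk (hasDerivAt_id s))

theorem hasDerivAt_partial1 {E : Type*} [NormedAddCommGroup E] [NormedSpace ℝ E]
    (u : ℝ × ℝ → E) (hu : Differentiable ℝ u) (t s : ℝ) :
    HasDerivAt (fun t' => u (t', s)) (fderiv ℝ u (t, s) (1, 0)) t :=
  (hu (t, s)).hasFDerivAt.comp_hasDerivAt t ((hasDerivAt_id t).prodMk (hasDerivAt_const t s))

theorem hasDerivAt_integral_param (G : ℝ × ℝ → ℝ) (hG : ContDiff ℝ 1 G) (a b s₀ : ℝ) :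
    HasDerivAt (fun s => ∫ t in a..b, G (s, t))
      (∫ t in a..b, fderiv ℝ G (s₀, t) (1, 0)) s₀ := by
  have hGd : Differentiable ℝ G := hG.differentiable one_ne_zero
  have hGc : Continuous G := hGd.continuous
  have hG'c : Continuous fun p => fderiv ℝ G p (1, 0) :=
    (hG.continuous_fderiv one_ne_zero).clm_apply continuous_const
  obtain ⟨C, hC⟩ :=
    ((isCompact_closedBall s₀ 1).prod isCompact_uIcc).exists_bound_of_continuousOn
      (f := fun p : ℝ × ℝ => ‖fderiv ℝ G p (1, 0)‖) hG'c.norm.continuousOn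
  have key := hasDerivAt_integral_of_dominated_loc_of_deriv_le (F := fun s t => G (s, t))
      (F' := fun s t => fderiv ℝ G (s, t) (1, 0)) (x₀ := s₀) (a := a) (b := b)
      (μ := volume) (bound := fun _ => C) (Metric.ball_mem_nhds s₀ one_pos)
      (Eventually.of_forall fun x =>
        (hGc.comp (continuous_const.prodMk continuous_id)).aestronglyMeasurable)
      ((hGc.comp (continuous_const.prodMk continuous_id)).intervalIntegrable a b)
      ((hG'c.comp (continuous_const.prodMk continuous_id)).aestronglyMeasurable)
      (MeasureTheory.ae_of_all _ fun t ht x hx => by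
        simpa using hC (x, t) ⟨Metric.ball_subset_closedBall hx, uIoc_subset_uIcc ht⟩)
      intervalIntegrable_const
      (MeasureTheory.ae_of_all _ fun t _ x _ => hasDerivAt_partial1 G hGd x t)
  exact key.2

theorem vec_decomp (x y : Fin n → ℝ) :
    ((0, Fin.cons x (fun _ => y)) : Jet n 1) =
      (∑ i, x i • eY n 1 0 i) + (∑ i, y i • eY n 1 1 i) := by
  refine Prod.ext ?_ ?_
  · simp [eY, Prod.fst_sum]
  · funext a j
    have h2 : ((∑ i, x i • eY n 1 0 i) + (∑ i, y i • eY n 1 1 i)).2 a j =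
        (∑ i, x i * (eY n 1 0 i).2 a j) + (∑ i, y i * (eY n 1 1 i).2 a j) := by
      simp [Prod.snd_sum, Finset.sum_apply]
    rw [h2]
    match a with
    | 0 => simp [eY, Finset.sum_ite_eq', Fin.cons_zero, eq_comm]
    | 1 => simp [eY, Finset.sum_ite_eq', Fin.cons_succ, eq_comm]

theorem fderiv_decomp (ℓ : Jet n 1 → ℝ) (L : Jet n 1) (x y : Fin n → ℝ) :
    fderiv ℝ ℓ L ((0, Fin.cons x (fun _ => y)) : Jet n 1) =
      (∑ i, x i * fderiv ℝ ℓ L (eY n 1 0 i)) + ∑ i, y i * fderiv ℝ ℓ L (eY n 1 1 i) := by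
  rw [vec_decomp, map_add, map_sum, map_sum]
  simp [smul_eq_mul]

/-- The variation vector field `δ(t) = ∂F/∂s (t,0)`. -/
def varVec (F : ℝ → ℝ → Fin n → ℝ) (t : ℝ) : Fin n → ℝ :=
  fderiv ℝ (fun p : ℝ × ℝ => F p.1 p.2) (t, 0) (0, 1)

variable {ℓ : Jet n 1 → ℝ} {γ : ℝ → Fin n → ℝ} {F : ℝ → ℝ → Fin n → ℝ}

theorem contDiff_varVec (hFs : ContDiff ℝ (⊤ : ℕ∞) (fun p : ℝ × ℝ => F p.1 p.2)) :
    ContDiff ℝ (⊤ : ℕ∞) (varVec F) :=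
  (((hFs.fderiv_right le_rfl).comp
      (contDiff_id.prodMk contDiff_const)).clm_apply contDiff_const)

theorem varVec_eq_zero (hFs : ContDiff ℝ (⊤ : ℕ∞) (fun p : ℝ × ℝ => F p.1 p.2)) {c : ℝ}
    (hfix : ∀ s, F c s = F c 0) : varVec F c = 0 := by
  have h1 : HasDerivAt (fun s => F c s) (varVec F c) 0 :=
    hasDerivAt_partial2 (fun p : ℝ × ℝ => F p.1 p.2) (hFs.differentiable (by simp)) c 0
  have h2 : (fun s => F c s) = fun _ => F c 0 := funext hfix
  rw [h2] at h1
  exact h1.unique (hasDerivAt_const 0 _)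

theorem fix_point_eq {c : ℝ}
    (hfix : ∀ s, lift n k (fun t => F t s) c = lift n k γ c) : ∀ s, F c s = γ c := by
  intro s
  have := congrFun (congrArg Prod.snd (hfix s)) 0
  simpa [lift] using this

theorem action_hasDerivAt (h1 : 1 ≤ k) (hℓ : ContDiff ℝ (⊤ : ℕ∞) ℓ) (hγ : ContDiff ℝ (⊤ : ℕ∞) γ)
    (hFs : ContDiff ℝ (⊤ : ℕ∞) (fun p : ℝ × ℝ => F p.1 p.2)) (hF0 : ∀ t, F t 0 = γ t) (a b : ℝ) :
    HasDerivAt (fun s => action (fun u => ℓ (projL n h1 u) • coT n k) (fun t => F t s) a b)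
      (∫ t in a..b,
        ((∑ i, varVec F t i * fderiv ℝ ℓ (lift n 1 γ t) (eY n 1 0 i)) +
          ∑ i, deriv (varVec F) t i * fderiv ℝ ℓ (lift n 1 γ t) (eY n 1 1 i))) 0 := by
  set u : ℝ × ℝ → Fin n → ℝ := fun p => F p.1 p.2 with hu_def
  have hu : ContDiff ℝ (⊤ : ℕ∞) u := hFs
  have hud : Differentiable ℝ u := hu.differentiable (by simp)
  set v : ℝ × ℝ → Fin n → ℝ := fun p => fderiv ℝ u p (1, 0) with hv_def
  have hv : ContDiff ℝ (⊤ : ℕ∞) v := (hu.fderiv_right le_rfl).clm_apply contDiff_const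
  set w : ℝ × ℝ → Jet n 1 :=
    fun q => (q.2, Fin.cons (u (q.2, q.1)) (fun _ => v (q.2, q.1))) with hw_def
  have hsw : ContDiff ℝ (⊤ : ℕ∞) (fun q : ℝ × ℝ => ((q.2, q.1) : ℝ × ℝ)) :=
    contDiff_snd.prodMk contDiff_fst
  have hw : ContDiff ℝ (⊤ : ℕ∞) w := by
    refine contDiff_snd.prodMk (contDiff_pi.2 fun a => ?_)
    refine Fin.cases ?_ (fun j => ?_) a
    · simpa [Function.comp_def] using hu.comp hsw
    · simpa [Function.comp_def] using hv.comp hsw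
  set G : ℝ × ℝ → ℝ := fun q => ℓ (w q) with hG_def
  have hG : ContDiff ℝ (⊤ : ℕ∞) G := hℓ.comp hw
  have hlift : ∀ s t : ℝ, lift n 1 (fun t' => F t' s) t = w (s, t) := by
    intro s t
    refine Prod.ext rfl ?_
    funext a
    refine Fin.cases ?_ (fun j => ?_) a
    · simp [lift, hw_def, hu_def]
    · simp only [lift, Fin.cons_succ]
      have hj1 : ((Fin.succ j : Fin 2) : ℕ) = 1 := by
        have hj : (j : ℕ) = 0 := by omega
        simp [Fin.val_succ, hj]
      rw [hj1, iteratedDeriv_one]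
      exact (hasDerivAt_partial1 u hud t s).deriv
  have hact : ∀ s : ℝ, action (fun u => ℓ (projL n h1 u) • coT n k) (fun t => F t s) a b =
      ∫ t in a..b, G (s, t) := by
    intro s
    unfold action
    refine intervalIntegral.integral_congr fun t _ => ?_
    have hγs : ContDiff ℝ (⊤ : ℕ∞) (fun t' => F t' s) := hFs.comp (contDiff_id.prodMk contDiff_const)
    have hld : HasDerivAt (lift n k (fun t' => F t' s))
        (1, fun a : Fin (k+1) =>
          deriv (fun t' => iteratedDeriv (a : ℕ) (fun t'' => F t'' s) t') t) t := by
      refine (hasDerivAt_id t).prodMk (hasDerivAt_pi.2 fun a => ?_)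
      exact ((contDiff_iteratedDeriv' _ hγs).differentiable (by simp) t).hasDerivAt
    have : deriv (lift n k (fun t' => F t' s)) t =
        (1, fun a : Fin (k+1) =>
          deriv (fun t' => iteratedDeriv (a : ℕ) (fun t'' => F t'' s) t') t) :=
      hld.deriv
    rw [this, ContinuousLinearMap.smul_apply, projL_lift, hlift]
    simp [coT, G]
  have hfun : (fun s => action (fun u => ℓ (projL n h1 u) • coT n k) (fun t => F t s) a b) =
      fun s => ∫ t in a..b, G (s, t) := funext hact
  rw [hfun]
  have key := hasDerivAt_integral_param G (hG.of_le (by simp)) a b 0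
  have hγF : (fun t' => F t' 0) = γ := funext hF0
  have hintg : ∀ t : ℝ, fderiv ℝ G (0, t) (1, 0) =
      (∑ i, varVec F t i * fderiv ℝ ℓ (lift n 1 γ t) (eY n 1 0 i)) +
        ∑ i, deriv (varVec F) t i * fderiv ℝ ℓ (lift n 1 γ t) (eY n 1 1 i) := by
    intro t
    have h₁ : HasDerivAt (fun s => G (s, t)) (fderiv ℝ G (0, t) (1, 0)) 0 :=
      hasDerivAt_partial1 G (hG.differentiable (by simp)) 0 t
    have hδ : HasDerivAt (fun s => u (t, s)) (varVec F t) 0 := hasDerivAt_partial2 u hud t 0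
    have hfd : Differentiable ℝ (fderiv ℝ u) := (hu.fderiv_right (m := (⊤ : ℕ∞)) le_rfl).differentiable (by simp)
    have hsymm := second_derivative_symmetric (f := u) (f' := fderiv ℝ u)
      (f'' := fderiv ℝ (fderiv ℝ u) (t, 0)) (x := (t, 0))
      (fun y => (hud y).hasFDerivAt) ((hfd (t, 0)).hasFDerivAt)
    have hδ' : HasDerivAt (varVec F) (fderiv ℝ (fderiv ℝ u) (t, 0) (1, 0) (0, 1)) t := by
      have := (hasDerivAt_partial1 (fderiv ℝ u) hfd t 0).clm_apply
        (hasDerivAt_const t ((0, 1) : ℝ × ℝ))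
      rw [map_zero, add_zero] at this
      exact this
    have hv2 : HasDerivAt (fun s => v (t, s)) (deriv (varVec F) t) 0 := by
      have := (hasDerivAt_partial2 (fderiv ℝ u) hfd t 0).clm_apply
        (hasDerivAt_const (0 : ℝ) ((1, 0) : ℝ × ℝ))
      rw [hδ'.deriv]
      simpa [hsymm (0, 1) (1, 0)] using this
    have hwd : HasDerivAt (fun s => w (s, t))
        ((0, Fin.cons (varVec F t) (fun _ => deriv (varVec F) t)) : Jet n 1) 0 := by
      refine (hasDerivAt_const (0 : ℝ) t).prodMk (hasDerivAt_pi.2 fun a => ?_)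
      refine Fin.cases ?_ (fun j => ?_) a
      · simpa using hδ
      · simpa using hv2
    have h₂ : HasDerivAt (fun s => G (s, t))
        (fderiv ℝ ℓ (w (0, t)) ((0, Fin.cons (varVec F t) (fun _ => deriv (varVec F) t)))) 0 :=
      ((hℓ.differentiable (by simp)) (w (0, t))).hasFDerivAt.comp_hasDerivAt 0 hwd
    have hw0 : w (0, t) = lift n 1 γ t := by rw [← hlift 0 t, hγF]
    rw [h₁.unique h₂, hw0, fderiv_decomp]
  rw [intervalIntegral.integral_congr fun t _ => hintg t] at key
  exact key

theorem EL_to_VP (h1 : 1 ≤ k) (hℓ : ContDiff ℝ (⊤ : ℕ∞) ℓ) (hγ : ContDiff ℝ (⊤ : ℕ∞) γ) {I : Set ℝ}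
    (hEL : ∀ t ∈ I, ∀ i : Fin n,
      fderiv ℝ ℓ (lift n 1 γ t) (eY n 1 0 i)
        - deriv (fun s => fderiv ℝ ℓ (lift n 1 γ s) (eY n 1 1 i)) t = 0) :
    SatisfiesVP (fun u => ℓ (projL n h1 u) • coT n k) Set.univ γ I := by
  intro a b hab hI F hvar _
  have key := action_hasDerivAt h1 hℓ hγ hvar.smooth hvar.init a b
  rw [key.deriv]
  have hδs : ContDiff ℝ (⊤ : ℕ∞) (varVec F) := contDiff_varVec hvar.smooth
  have hδa : varVec F a = 0 := by
    refine varVec_eq_zero hvar.smooth fun s => ?_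
    rw [fix_point_eq hvar.fix_a s, fix_point_eq hvar.fix_a 0]
  have hδb : varVec F b = 0 := by
    refine varVec_eq_zero hvar.smooth fun s => ?_
    rw [fix_point_eq hvar.fix_b s, fix_point_eq hvar.fix_b 0]
  have hBs : ∀ i : Fin n, ContDiff ℝ (⊤ : ℕ∞) (fun s => fderiv ℝ ℓ (lift n 1 γ s) (eY n 1 1 i)) :=
    fun i => ((hℓ.fderiv_right le_rfl).comp (contDiff_lift hγ)).clm_apply contDiff_const
  have hAs : ∀ i : Fin n, ContDiff ℝ (⊤ : ℕ∞) (fun s => fderiv ℝ ℓ (lift n 1 γ s) (eY n 1 0 i)) :=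
    fun i => ((hℓ.fderiv_right le_rfl).comp (contDiff_lift hγ)).clm_apply contDiff_const
  set g : ℝ → ℝ :=
    fun t => ∑ i, fderiv ℝ ℓ (lift n 1 γ t) (eY n 1 1 i) * varVec F t i with hg_def
  have hderiv : ∀ x ∈ Set.uIcc a b, HasDerivAt g
      ((∑ i, varVec F x i * fderiv ℝ ℓ (lift n 1 γ x) (eY n 1 0 i)) +
        ∑ i, deriv (varVec F) x i * fderiv ℝ ℓ (lift n 1 γ x) (eY n 1 1 i)) x := by
    intro x hx
    have hxI : x ∈ I := hI (by rwa [Set.uIcc_of_le hab] at hx)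
    have hsum : HasDerivAt g
        (∑ i, (fderiv ℝ ℓ (lift n 1 γ x) (eY n 1 0 i) * varVec F x i +
          fderiv ℝ ℓ (lift n 1 γ x) (eY n 1 1 i) * deriv (varVec F) x i)) x := by
      refine HasDerivAt.fun_sum fun i _ => ?_
      have hBd : HasDerivAt (fun s => fderiv ℝ ℓ (lift n 1 γ s) (eY n 1 1 i))
          (fderiv ℝ ℓ (lift n 1 γ x) (eY n 1 0 i)) x := by
        have h0 := (((hBs i).differentiable (by simp)) x).hasDerivAt
        have h1' := hEL x hxI i
        rw [sub_eq_zero] at h1'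
        rw [h1']
        exact h0
      have hδd : HasDerivAt (fun t => varVec F t i) (deriv (varVec F) x i) x :=
        hasDerivAt_pi.1 ((hδs.differentiable (by simp) x).hasDerivAt) i
      exact hBd.mul hδd
    convert hsum using 1
    rw [Finset.sum_add_distrib]
    congr 1
    · exact Finset.sum_congr rfl fun i _ => mul_comm _ _
    · exact Finset.sum_congr rfl fun i _ => mul_comm _ _
  have hcont : Continuous (fun x =>
      (∑ i, varVec F x i * fderiv ℝ ℓ (lift n 1 γ x) (eY n 1 0 i)) +
        ∑ i, deriv (varVec F) x i * fderiv ℝ ℓ (lift n 1 γ x) (eY n 1 1 i)) := by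
    refine Continuous.add ?_ ?_
    · refine continuous_finset_sum _ fun i _ => Continuous.mul ?_ ((hAs i).continuous)
      exact (continuous_apply i).comp (hδs.continuous)
    · refine continuous_finset_sum _ fun i _ => Continuous.mul ?_ ((hBs i).continuous)
      exact (continuous_apply i).comp ((contDiff_deriv' hδs).continuous)
  rw [intervalIntegral.integral_eq_sub_of_hasDerivAt hderiv
    (hcont.intervalIntegrable a b)]
  simp [hg_def, hδa, hδb]

theorem iteratedDeriv_polyEval (p : ℝ[X]) (m : ℕ) :
    iteratedDeriv m (fun x => p.eval x) = fun x => (Polynomial.derivative^[m] p).eval x := by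
  induction m with
  | zero => simp
  | succ m ih =>
      rw [iteratedDeriv_succ, ih, Function.iterate_succ_apply']
      funext x
      exact Polynomial.deriv _

theorem iteratedDeriv_add' {E : Type*} [NormedAddCommGroup E] [NormedSpace ℝ E]
    (m : ℕ) {f g : ℝ → E} (hf : ContDiff ℝ (⊤ : ℕ∞) f) (hg : ContDiff ℝ (⊤ : ℕ∞) g) :
    iteratedDeriv m (fun x => f x + g x) = fun x => iteratedDeriv m f x + iteratedDeriv m g x := by
  induction m generalizing f g with
  | zero => simp
  | succ m ih =>
      rw [iteratedDeriv_succ', iteratedDeriv_succ', iteratedDeriv_succ']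
      have : (deriv fun x => f x + g x) = fun x => deriv f x + deriv g x := by
        funext x
        exact deriv_fun_add ((hf.differentiable (by simp)) x) ((hg.differentiable (by simp)) x)
      rw [this]
      exact ih (contDiff_deriv' hf) (contDiff_deriv' hg)

theorem iteratedDeriv_smul_const' {E : Type*} [NormedAddCommGroup E] [NormedSpace ℝ E]
    (m : ℕ) {f : ℝ → ℝ} (hf : ContDiff ℝ (⊤ : ℕ∞) f) (c : E) :
    iteratedDeriv m (fun x => f x • c) = fun x => iteratedDeriv m f x • c := by
  induction m generalizing f with
  | zero => simp
  | succ m ih =>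
      rw [iteratedDeriv_succ', iteratedDeriv_succ']
      have : (deriv fun x => f x • c) = fun x => deriv f x • c := by
        funext x
        exact deriv_smul_const ((hf.differentiable (by simp)) x) c
      rw [this]
      exact ih (contDiff_deriv' hf)

theorem VP_to_EL (h1 : 1 ≤ k) (hℓ : ContDiff ℝ (⊤ : ℕ∞) ℓ) (hγ : ContDiff ℝ (⊤ : ℕ∞) γ) {I : Set ℝ}
    (hIo : IsOpen I)
    (hVP : SatisfiesVP (fun u => ℓ (projL n h1 u) • coT n k) Set.univ γ I) :
    ∀ t ∈ I, ∀ i : Fin n,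
      fderiv ℝ ℓ (lift n 1 γ t) (eY n 1 0 i)
        - deriv (fun s => fderiv ℝ ℓ (lift n 1 γ s) (eY n 1 1 i)) t = 0 := by
  intro t ht i
  set A : ℝ → ℝ := fun x => fderiv ℝ ℓ (lift n 1 γ x) (eY n 1 0 i) with hA_def
  set B : ℝ → ℝ := fun x => fderiv ℝ ℓ (lift n 1 γ x) (eY n 1 1 i) with hB_def
  have hAs : ContDiff ℝ (⊤ : ℕ∞) A :=
    ((hℓ.fderiv_right le_rfl).comp (contDiff_lift hγ)).clm_apply contDiff_const
  have hBs : ContDiff ℝ (⊤ : ℕ∞) B :=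
    ((hℓ.fderiv_right le_rfl).comp (contDiff_lift hγ)).clm_apply contDiff_const
  set E : ℝ → ℝ := fun x => A x - deriv B x with hE_def
  have hEc : Continuous E := (hAs.continuous).sub (contDiff_deriv' hBs).continuous
  show E t = 0
  by_contra hne
  have hEtpos : 0 < |E t| := abs_pos.2 hne
  obtain ⟨ε, hε0, hball⟩ := Metric.isOpen_iff.1 hIo t ht
  obtain ⟨d, hd0, hdd⟩ := Metric.continuousAt_iff.1 hEc.continuousAt (|E t| / 2) (by positivity)
  set r : ℝ := min (ε / 2) (d / 2) with hr_def
  have hr0 : 0 < r := lt_min (by linarith) (by linarith)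
  have hrε : r < ε := (min_le_left _ _).trans_lt (by linarith)
  have hrd : r < d := (min_le_right _ _).trans_lt (by linarith)
  set a : ℝ := t - r with ha_def
  set b : ℝ := t + r with hb_def
  have hab : a < b := by rw [ha_def, hb_def]; linarith
  have hdist : ∀ x ∈ Set.Icc a b, |x - t| ≤ r := by
    intro x hx
    have h1' := hx.1
    have h2' := hx.2
    rw [ha_def] at h1'
    rw [hb_def] at h2'
    exact abs_le.2 ⟨by linarith, by linarith⟩
  have hIcc : Set.Icc a b ⊆ I := fun x hx => hball (by
    rw [Metric.mem_ball, Real.dist_eq]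
    exact lt_of_le_of_lt (hdist x hx) hrε)
  have hEclose : ∀ x ∈ Set.Icc a b, |E x - E t| ≤ |E t| / 2 := by
    intro x hx
    have := hdd (show dist x t < d by rw [Real.dist_eq]; exact lt_of_le_of_lt (hdist x hx) hrd)
    rw [Real.dist_eq] at this
    exact this.le
  -- the polynomial bump
  set ψ : ℝ → ℝ := fun x => ((x - a) * (b - x)) ^ (k + 1) with hψ_def
  have hψs : ContDiff ℝ (⊤ : ℕ∞) ψ := by
    rw [hψ_def]
    exact ((contDiff_id.sub contDiff_const).mul (contDiff_const.sub contDiff_id)).pow _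
  have hψc : Continuous ψ := hψs.continuous
  have hψa : ψ a = 0 := by simp [hψ_def]
  have hψb : ψ b = 0 := by simp [hψ_def]
  have hψnn : ∀ x ∈ Set.Icc a b, 0 ≤ ψ x := fun x hx =>
    pow_nonneg (mul_nonneg (by linarith [hx.1]) (by linarith [hx.2])) _
  have hψpos : ∀ x ∈ Set.Ioo a b, 0 < ψ x := fun x hx =>
    pow_pos (mul_pos (by linarith [hx.1]) (by linarith [hx.2])) _
  have hvan : ∀ (s : ℝ) (m : ℕ), m ≤ k → ∀ c : ℝ, c = a ∨ c = b →
      iteratedDeriv m (fun x => s * ψ x) c = 0 := by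
    intro s m hm c hc
    have hev : (fun x => s * ψ x) = fun x =>
        (Polynomial.C s * ((Polynomial.X - Polynomial.C a) *
          (Polynomial.C b - Polynomial.X)) ^ (k + 1)).eval x := by
      funext x; simp [hψ_def]
    rw [hev, iteratedDeriv_polyEval]
    have hdvd : (Polynomial.X - Polynomial.C c) ^ (k + 1) ∣
        Polynomial.C s * ((Polynomial.X - Polynomial.C a) *
          (Polynomial.C b - Polynomial.X)) ^ (k + 1) := by
      rcases hc with rfl | rfl
      · exact Dvd.dvd.mul_left (by rw [mul_pow]; exact dvd_mul_of_dvd_left dvd_rfl _) _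
      · refine Dvd.dvd.mul_left ?_ _
        rw [mul_pow]
        exact dvd_mul_of_dvd_right (pow_dvd_pow_of_dvd ⟨-1, by ring⟩ _) _
    have h2 := Polynomial.pow_sub_dvd_iterate_derivative_of_pow_dvd m hdvd
    have h3 : (Polynomial.X - Polynomial.C c) ∣
        Polynomial.derivative^[m] (Polynomial.C s * ((Polynomial.X - Polynomial.C a) *
          (Polynomial.C b - Polynomial.X)) ^ (k + 1)) :=
      dvd_trans (dvd_pow_self _ (by omega)) h2
    simpa using Polynomial.dvd_iff_isRoot.1 h3
  -- the variation
  set c1 : Fin n → ℝ := Pi.single i (1 : ℝ) with hc1_def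
  set F : ℝ → ℝ → Fin n → ℝ := fun x s => γ x + (s * ψ x) • c1 with hF_def
  have hFs : ContDiff ℝ (⊤ : ℕ∞) (fun p : ℝ × ℝ => F p.1 p.2) := by
    simp only [hF_def]
    exact (hγ.comp contDiff_fst).add
      ((contDiff_snd.mul (hψs.comp contDiff_fst)).smul contDiff_const)
  have hF0 : ∀ x, F x 0 = γ x := by intro x; simp [hF_def]
  have hsψ : ∀ s : ℝ, ContDiff ℝ (⊤ : ℕ∞) (fun x => s * ψ x) := fun s => contDiff_const.mul hψs
  have hfix : ∀ c : ℝ, c = a ∨ c = b →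
      ∀ s, lift n k (fun x => F x s) c = lift n k γ c := by
    intro c hc s
    refine Prod.ext rfl ?_
    funext m
    show iteratedDeriv (m : ℕ) (fun x => F x s) c = iteratedDeriv (m : ℕ) γ c
    have hFeq : (fun x => F x s) = fun x => γ x + (s * ψ x) • c1 := by
      funext x; rw [hF_def]
    have hsm : ContDiff ℝ (⊤ : ℕ∞) (fun x => (s * ψ x) • c1) := (hsψ s).smul contDiff_const
    have h7 := congrFun (iteratedDeriv_add' (m : ℕ) hγ hsm) c
    have h8 := congrFun (iteratedDeriv_smul_const' (m : ℕ) (hsψ s) c1) c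
    rw [hFeq, h7, h8, hvan s (m : ℕ) (by have := m.isLt; omega) c hc]
    simp
  have hvar : IsVariation n k γ a b F :=
    ⟨hFs, hF0, hfix a (Or.inl rfl), hfix b (Or.inr rfl)⟩
  have hz := hVP a b hab.le hIcc F hvar (fun s x _ => Set.mem_univ _)
  have key := action_hasDerivAt h1 hℓ hγ hFs hF0 a b
  rw [key.deriv] at hz
  -- identify the variation vector
  have hδeq : varVec F = fun x => ψ x • c1 := by
    funext x
    have h1' : HasDerivAt (fun s => F x s) (varVec F x) 0 :=
      hasDerivAt_partial2 (fun p : ℝ × ℝ => F p.1 p.2) (hFs.differentiable (by simp)) x 0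
    have hmul : HasDerivAt (fun s : ℝ => s * ψ x) (ψ x) 0 := by
      simpa using (hasDerivAt_id (0 : ℝ)).mul_const (ψ x)
    have h2' : HasDerivAt (fun s => F x s) (ψ x • c1) 0 := by
      have := (hmul.smul_const c1).const_add (γ x)
      simpa [hF_def] using this
    exact h1'.unique h2'
  have hδ'eq : deriv (fun x => ψ x • c1) = fun x => deriv ψ x • c1 := by
    funext x
    exact (((hψs.differentiable (by simp)) x).hasDerivAt.smul_const c1).deriv
  have hred : ∀ x : ℝ, ((∑ j, (ψ x • c1) j * fderiv ℝ ℓ (lift n 1 γ x) (eY n 1 0 j)) +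
      ∑ j, (deriv ψ x • c1) j * fderiv ℝ ℓ (lift n 1 γ x) (eY n 1 1 j))
      = ψ x * A x + deriv ψ x * B x := by
    intro x
    have hc : ∀ (rr : ℝ) (g : Fin n → ℝ), (∑ j, (rr • c1) j * g j) = rr * g i := by
      intro rr g
      rw [Finset.sum_eq_single i]
      · simp [hc1_def]
      · intro j _ hj; simp [hc1_def, Pi.single_apply, hj]
      · intro h; exact absurd (Finset.mem_univ i) h
    rw [hc, hc, hA_def, hB_def]
  have hz2 : ∫ x in a..b, (ψ x * A x + deriv ψ x * B x) = 0 := by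
    rw [← hz]
    refine intervalIntegral.integral_congr fun x _ => ?_
    simp only [hδeq, hδ'eq]
    exact (hred x).symm
  -- integration by parts
  have hψ'c : Continuous (deriv ψ) := (contDiff_deriv' hψs).continuous
  have hint1 : IntervalIntegrable (fun x => ψ x * A x) volume a b :=
    (hψc.mul hAs.continuous).intervalIntegrable a b
  have hint2 : IntervalIntegrable (fun x => deriv ψ x * B x) volume a b :=
    (hψ'c.mul hBs.continuous).intervalIntegrable a b
  rw [intervalIntegral.integral_add hint1 hint2] at hz2
  have hibp := intervalIntegral.integral_mul_deriv_eq_deriv_mul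
    (u := B) (v := ψ) (u' := deriv B) (v' := deriv ψ)
    (fun x _ => ((hBs.differentiable (by simp)) x).hasDerivAt)
    (fun x _ => ((hψs.differentiable (by simp)) x).hasDerivAt)
    ((contDiff_deriv' hBs).continuous.intervalIntegrable a b)
    (hψ'c.intervalIntegrable a b)
  have hcomm : ∫ x in a..b, deriv ψ x * B x = ∫ x in a..b, B x * deriv ψ x :=
    intervalIntegral.integral_congr fun x _ => mul_comm _ _
  rw [hcomm, hibp, hψa, hψb] at hz2
  have hz3 : ∫ x in a..b, ψ x * E x = 0 := by
    have h51 : (fun x => ψ x * E x) = fun x => ψ x * A x - deriv B x * ψ x := by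
      funext x; simp only [hE_def]; ring
    rw [h51, intervalIntegral.integral_sub (f := fun x => ψ x * A x) (g := fun x => deriv B x * ψ x) hint1
      (((contDiff_deriv' hBs).continuous.mul hψc).intervalIntegrable a b)]
    simp only [mul_zero, zero_sub, sub_zero] at hz2
    linarith [hz2]
  have hψintpos : 0 < ∫ x in a..b, ψ x :=
    intervalIntegral.intervalIntegral_pos_of_pos_on (hψc.intervalIntegrable a b) hψpos hab
  have h5 : ∫ x in a..b, ψ x * (E x - E t) = -(E t * ∫ x in a..b, ψ x) := by
    have h51 : (fun x => ψ x * (E x - E t)) = fun x => ψ x * E x - ψ x * E t := by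
      funext x; ring
    rw [h51, intervalIntegral.integral_sub (f := fun x => ψ x * E x) (g := fun x => ψ x * E t) ((hψc.mul hEc).intervalIntegrable a b)
      ((hψc.mul continuous_const).intervalIntegrable a b), hz3,
      intervalIntegral.integral_mul_const]
    ring
  have h6 : |∫ x in a..b, ψ x * (E x - E t)| ≤ |E t| / 2 * ∫ x in a..b, ψ x := by
    calc |∫ x in a..b, ψ x * (E x - E t)| ≤ ∫ x in a..b, |ψ x * (E x - E t)| :=
        intervalIntegral.abs_integral_le_integral_abs hab.le
    _ ≤ ∫ x in a..b, |E t| / 2 * ψ x := by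
        refine intervalIntegral.integral_mono_on hab.le
          ((hψc.mul (hEc.sub continuous_const)).abs.intervalIntegrable a b)
          ((continuous_const.mul hψc).intervalIntegrable a b) fun x hx => ?_
        rw [abs_mul, abs_of_nonneg (hψnn x hx)]
        calc ψ x * |E x - E t| ≤ ψ x * (|E t| / 2) :=
            mul_le_mul_of_nonneg_left (hEclose x hx) (hψnn x hx)
        _ = |E t| / 2 * ψ x := mul_comm _ _
    _ = |E t| / 2 * ∫ x in a..b, ψ x := intervalIntegral.integral_const_mul _ _
  rw [h5, abs_neg, abs_mul, abs_of_nonneg hψintpos.le] at h6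
  nlinarith [hψintpos, hEtpos, h6]

end JetAux

/-- For a first-order Lagrangian `L` on `J^k(E)` (`k ≥ 2`) and `α = L dt`,
a curve `γ` satisfies the variational principle of `α` iff it satisfies the Euler–Lagrange
equations `∂L/∂y^i(t,γ,γ') − d/dt[∂L/∂y^i_(1)(t,γ,γ')] = 0`. -/
theorem stmt5 (n k : ℕ) (hk : 2 ≤ k)
    (ℓ : Jet n 1 → ℝ) (hℓ : ContDiff ℝ (⊤ : ℕ∞) ℓ)
    (γ : ℝ → Fin n → ℝ) (hγ : ContDiff ℝ (⊤ : ℕ∞) γ)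
    (I : Set ℝ) (hIo : IsOpen I) (hIc : I.OrdConnected) :
    Jet.SatisfiesVP
        (fun u => ℓ (Jet.projL n (show 1 ≤ k by omega) u) • Jet.coT n k)
        Set.univ γ I ↔
      ∀ t ∈ I, ∀ i : Fin n,
        fderiv ℝ ℓ (Jet.lift n 1 γ t) (Jet.eY n 1 0 i)
          - deriv (fun s => fderiv ℝ ℓ (Jet.lift n 1 γ s) (Jet.eY n 1 1 i)) t = 0 := by
  constructor
  · intro hVP
    exact VP_to_EL (show 1 ≤ k by omega) hℓ hγ hIo hVP
  · intro hEL
    exact EL_to_VP (show 1 ≤ k by omega) hℓ hγ hEL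
end
end

section
/- Assume n ≥ 2. Let α_o be a 1-form of Poincaré–Cartan type of order ≤ k−1 on an open set U ⊆ J^k(E), let σ be a source form on U with dα_o − σ holonomic, and let X_v be a D-symmetry on U associated with a smooth map v = (v^0, v^i). Then X_v is an infinitesimal symmetry for the action of α_o if and only if it satisfies the linear differential equation (d/dt)( α_o(X_v) ) = σ( d/dt, X_v ) on U, where (d/dt) on the left denotes the total derivative of the function α_o(X_v). -/
open Set Filter

noncomputable section

namespace Jet
namespace Aux

variable {n k : ℕ}

lemma eY_fst (a : Fin (k+1)) (i : Fin n) : (eY n k a i).1 = 0 := rfl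

lemma eY_snd (a : Fin (k+1)) (i : Fin n) (b : Fin (k+1)) (j : Fin n) :
    (eY n k a i).2 b j = if b = a ∧ j = i then 1 else 0 := rfl

lemma dtVF_fst (u : Jet n k) : (dtVF n k u).1 = 1 := rfl

lemma dtVF_snd (u : Jet n k) (b : Fin (k+1)) (j : Fin n) :
    (dtVF n k u).2 b j = if h : (b : ℕ) + 1 < k + 1 then u.2 ⟨(b : ℕ) + 1, h⟩ j else 0 := rfl

/-- The linear "shift" map, which is the derivative of `dtVF`. -/
def shiftLin (n k : ℕ) : Jet n k →ₗ[ℝ] Jet n k where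
  toFun u := (0, fun b i => if h : (b : ℕ) + 1 < k + 1 then u.2 ⟨(b : ℕ) + 1, h⟩ i else 0)
  map_add' u v := by
    refine Prod.ext (by simp) ?_
    funext b i
    show _ = (fun (b : Fin (k+1)) (i : Fin n) => if h : (b : ℕ) + 1 < k + 1 then u.2 ⟨(b : ℕ) + 1, h⟩ i else 0) b i + (fun (b : Fin (k+1)) (i : Fin n) => if h : (b : ℕ) + 1 < k + 1 then v.2 ⟨(b : ℕ) + 1, h⟩ i else 0) b i
    by_cases h : (b : ℕ) + 1 < k + 1
    · simp only [dif_pos h]; rfl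
    · simp only [dif_neg h]; simp
  map_smul' c u := by
    refine Prod.ext (by simp) ?_
    funext b i
    show _ = c • (fun (b : Fin (k+1)) (i : Fin n) => if h : (b : ℕ) + 1 < k + 1 then u.2 ⟨(b : ℕ) + 1, h⟩ i else 0) b i
    by_cases h : (b : ℕ) + 1 < k + 1
    · simp only [dif_pos h]; rfl
    · simp only [dif_neg h]; simp

def shiftL (n k : ℕ) : Jet n k →L[ℝ] Jet n k :=
  LinearMap.toContinuousLinearMap (shiftLin n k)

lemma shiftL_fst (u : Jet n k) : (shiftL n k u).1 = 0 := rfl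

lemma shiftL_snd (u : Jet n k) (b : Fin (k+1)) (i : Fin n) :
    (shiftL n k u).2 b i = if h : (b : ℕ) + 1 < k + 1 then u.2 ⟨(b : ℕ) + 1, h⟩ i else 0 :=
  rfl

lemma dtVF_eq (u : Jet n k) :
    dtVF n k u = ((1 : ℝ), (0 : Fin (k+1) → Fin n → ℝ)) + shiftL n k u := by
  refine Prod.ext (by simp [dtVF_fst, shiftL_fst]) ?_
  funext b i
  show (dtVF n k u).2 b i = ((0 : Fin (k+1) → Fin n → ℝ) + (shiftL n k u).2) b i
  rw [dtVF_snd, Pi.add_apply, Pi.zero_apply, zero_add, shiftL_snd]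

lemma hasFDerivAt_dtVF (u : Jet n k) : HasFDerivAt (dtVF n k) (shiftL n k) u := by
  have h : dtVF n k = fun w => ((1 : ℝ), (0 : Fin (k+1) → Fin n → ℝ)) + shiftL n k w :=
    funext fun w => dtVF_eq w
  rw [h]
  exact (shiftL n k).hasFDerivAt.const_add _

lemma contDiff_dtVF : ContDiff ℝ (⊤ : ℕ∞) (dtVF n k) := by
  have h : dtVF n k = fun w => ((1 : ℝ), (0 : Fin (k+1) → Fin n → ℝ)) + shiftL n k w :=
    funext fun w => dtVF_eq w
  rw [h]
  exact contDiff_const.add (shiftL n k).contDiff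

lemma shiftL_eY (a : ℕ) (ha : 1 ≤ a) (hak : a ≤ k) (j : Fin n) :
    shiftL n k (eY n k ⟨a, by omega⟩ j) = eY n k ⟨a - 1, by omega⟩ j := by
  refine Prod.ext (by rw [shiftL_fst, eY_fst]) ?_
  funext b i
  rw [shiftL_snd, eY_snd]
  by_cases h : (b : ℕ) + 1 < k + 1
  · rw [dif_pos h, eY_snd]
    by_cases hb : (b : ℕ) = a - 1
    · have h1 : (⟨(b : ℕ) + 1, h⟩ : Fin (k+1)) = ⟨a, by omega⟩ := by
        apply Fin.ext; simp; omega
      have hb' : b = (⟨a - 1, by omega⟩ : Fin (k+1)) := by apply Fin.ext; simpa using hb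
      by_cases hij : i = j
      · rw [if_pos ⟨h1, hij⟩, if_pos ⟨hb', hij⟩]
      · rw [if_neg (fun hc => hij hc.2), if_neg (fun hc => hij hc.2)]
    · have h1 : (⟨(b : ℕ) + 1, h⟩ : Fin (k+1)) ≠ (⟨a, by omega⟩ : Fin (k+1)) :=
        Fin.ne_of_val_ne (by show (b : ℕ) + 1 ≠ a; omega)
      have h2 : b ≠ (⟨a - 1, by omega⟩ : Fin (k+1)) :=
        Fin.ne_of_val_ne (by show (b : ℕ) ≠ a - 1; omega)
      rw [if_neg (fun hc => h1 hc.1), if_neg (fun hc => h2 hc.1)]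
  · have h2 : b ≠ (⟨a - 1, by omega⟩ : Fin (k+1)) :=
      Fin.ne_of_val_ne (by show (b : ℕ) ≠ a - 1; omega)
    rw [dif_neg h, if_neg (fun hc => h2 hc.1)]

end Aux
end Jet

namespace Jet
namespace Aux2
open Jet.Aux

variable {n k : ℕ}

lemma coT_apply (u : Jet n k) : coT n k u = u.1 := rfl

lemma coY_apply (a : Fin (k+1)) (i : Fin n) (u : Jet n k) : coY n k a i u = u.2 a i := rfl

lemma dt_mem_InD (u : Jet n k) : InD u (dtVF n k u) := ⟨1, 0, by simp⟩

lemma eY_mem_InD (u : Jet n k) (i : Fin n) : InD u (eY n k (Fin.last k) i) := by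
  refine ⟨0, fun l => if l = i then 1 else 0, ?_⟩
  have h : ∀ l : Fin n, (if l = i then (1:ℝ) else 0) • eY n k (Fin.last k) l
      = if l = i then eY n k (Fin.last k) l else 0 := by intro l; split <;> simp
  simp only [h, zero_smul, zero_add, Finset.sum_ite_eq', Finset.mem_univ, if_pos]

lemma InD_neg {u x : Jet n k} (hx : InD u x) : InD u (-x) := by
  obtain ⟨c, w, rfl⟩ := hx
  exact ⟨-c, -w, by simp [neg_add, neg_smul, add_comm]⟩

lemma D_fst (u : Jet n k) (c : ℝ) (w : Fin n → ℝ) :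
    (c • dtVF n k u + ∑ l, w l • eY n k (Fin.last k) l).1 = c := by
  rw [← coT_apply, map_add, map_smul, map_sum]
  simp only [map_smul, coT_apply, dtVF_fst, eY_fst, smul_eq_mul, mul_zero, mul_one,
    Finset.sum_const_zero, add_zero]

lemma coY_eY_last (b : Fin (k+1)) (hb : (b:ℕ) < k) (j l : Fin n) :
    coY n k b j (eY n k (Fin.last k) l) = 0 := by
  rw [coY_apply, eY_snd, if_neg]
  intro hc
  have := congrArg Fin.val hc.1
  simp only [Fin.val_last] at this
  omega

lemma D_snd (u : Jet n k) (c : ℝ) (w : Fin n → ℝ) (b : Fin (k+1)) (hb : (b:ℕ) < k) (j : Fin n) :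
    (c • dtVF n k u + ∑ l, w l • eY n k (Fin.last k) l).2 b j
      = c * u.2 ⟨(b:ℕ)+1, by omega⟩ j := by
  rw [← coY_apply, map_add, map_smul, map_sum]
  have h1 : coY n k b j (dtVF n k u) = u.2 ⟨(b:ℕ)+1, by omega⟩ j := by
    rw [coY_apply, dtVF_snd, dif_pos (by omega : (b:ℕ)+1 < k+1)]
  simp only [map_smul, h1, smul_eq_mul, coY_eY_last b hb, mul_zero,
    Finset.sum_const_zero, add_zero]

lemma InD_snd {u x : Jet n k} (hx : InD u x) (b : Fin (k+1)) (hb : (b:ℕ) < k) (j : Fin n) :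
    x.2 b j = x.1 * u.2 ⟨(b:ℕ)+1, by omega⟩ j := by
  obtain ⟨c, w, rfl⟩ := hx
  rw [D_snd u c w b hb j, D_fst]

lemma Xv_fst (v0 : Jet n k → ℝ) (vi : Jet n k → Fin n → ℝ) (w : Jet n k) :
    (Xv v0 vi w).1 = v0 w := by
  rw [show (Xv v0 vi w).1 = coT n k (Xv v0 vi w) from rfl, Xv, map_add, map_smul, map_sum]
  simp only [map_sum, map_smul, coT_apply, dtVF_fst, eY_fst, smul_eq_mul, mul_zero, mul_one,
    Finset.sum_const_zero, add_zero]

lemma sum_pick (b : Fin (k+1)) (j : Fin n) (f : Fin (k+1) → Fin n → ℝ) :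
    (∑ a : Fin (k+1), ∑ i : Fin n, f a i * (if b = a ∧ j = i then (1:ℝ) else 0)) = f b j := by
  rw [Finset.sum_eq_single b]
  · rw [Finset.sum_eq_single j]
    · rw [if_pos ⟨rfl, rfl⟩, mul_one]
    · intro i _ hij; rw [if_neg (fun hc => hij hc.2.symm), mul_zero]
    · simp
  · intro a _ hab
    apply Finset.sum_eq_zero; intro i _
    rw [if_neg (fun hc => hab hc.1.symm), mul_zero]
  · simp

lemma Xv_snd (v0 : Jet n k → ℝ) (vi : Jet n k → Fin n → ℝ) (w : Jet n k)
    (b : Fin (k+1)) (hb : (b:ℕ) < k) (j : Fin n) :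
    (Xv v0 vi w).2 b j = v0 w * w.2 ⟨(b:ℕ)+1, by omega⟩ j
      + tderiv^[(b:ℕ)] (fun z => vi z j - z.2 1 j * v0 z) w := by
  rw [show (Xv v0 vi w).2 b j = coY n k b j (Xv v0 vi w) from rfl, Xv, map_add, map_smul, map_sum]
  have h1 : coY n k b j (dtVF n k w) = w.2 ⟨(b:ℕ)+1, by omega⟩ j := by
    rw [coY_apply, dtVF_snd, dif_pos (by omega : (b:ℕ)+1 < k+1)]
  have h2 : ∀ a : Fin (k+1), ∀ i : Fin n,
      coY n k b j (eY n k a i) = if b = a ∧ j = i then (1:ℝ) else 0 := fun a i => rfl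
  simp only [map_sum, map_smul, h1, smul_eq_mul, h2]
  rw [sum_pick b j]

section smooth
variable {E F G : Type*} [NormedAddCommGroup E] [NormedSpace ℝ E] [NormedAddCommGroup F]
  [NormedSpace ℝ F] [NormedAddCommGroup G] [NormedSpace ℝ G]

lemma diffAt {U : Set E} (hU : IsOpen U) {f : E → F} (hf : ContDiffOn ℝ (⊤ : ℕ∞) f U) {u : E}
    (hu : u ∈ U) : DifferentiableAt ℝ f u :=
  (hf.contDiffAt (hU.mem_nhds hu)).differentiableAt (by simp)

lemma fderiv_comp_clm (g : F →L[ℝ] G) {f : E → F} {u : E} (hf : DifferentiableAt ℝ f u) (z : E) :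
    fderiv ℝ (fun w => g (f w)) u z = g (fderiv ℝ f u z) := by
  have h := (g.hasFDerivAt.comp u hf.hasFDerivAt).fderiv
  calc fderiv ℝ (fun w => g (f w)) u z = fderiv ℝ (⇑g ∘ f) u z := rfl
    _ = (g.comp (fderiv ℝ f u)) z := by rw [h]
    _ = g (fderiv ℝ f u z) := rfl

lemma fderiv_clm_apply_const {Φ : E → F →L[ℝ] G} {u : E} (hΦ : DifferentiableAt ℝ Φ u)
    (c : F) (z : E) :
    fderiv ℝ (fun w => Φ w c) u z = fderiv ℝ Φ u z c := by
  rw [fderiv_clm_apply hΦ (differentiableAt_const c)]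
  simp

end smooth

lemma tderiv_contDiffOn {U : Set (Jet n k)} (hU : IsOpen U) {f : Jet n k → ℝ}
    (hf : ContDiffOn ℝ (⊤ : ℕ∞) f U) : ContDiffOn ℝ (⊤ : ℕ∞) (tderiv f) U :=
  (hf.fderiv_of_isOpen hU (by simp)).clm_apply contDiff_dtVF.contDiffOn

lemma tderiv_iter_contDiffOn {U : Set (Jet n k)} (hU : IsOpen U) {f : Jet n k → ℝ}
    (hf : ContDiffOn ℝ (⊤ : ℕ∞) f U) : ∀ a : ℕ, ContDiffOn ℝ (⊤ : ℕ∞) (tderiv^[a] f) U := by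
  intro a
  induction a with
  | zero => exact hf
  | succ m ih => rw [Function.iterate_succ_apply']; exact tderiv_contDiffOn hU ih

lemma sndFDeriv_symm {U : Set (Jet n k)} (hU : IsOpen U) {f : Jet n k → ℝ}
    (hf : ContDiffOn ℝ (⊤ : ℕ∞) f U) {u : Jet n k} (hu : u ∈ U) (v w : Jet n k) :
    fderiv ℝ (fderiv ℝ f) u v w = fderiv ℝ (fderiv ℝ f) u w v :=
  ((hf.contDiffAt (hU.mem_nhds hu)).isSymmSndFDerivAt (by rw [minSmoothness_of_isRCLikeNormedField]; exact WithTop.coe_le_coe.2 le_top)) v w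

end Aux2
end Jet

namespace Jet
namespace Aux3
open Jet.Aux Jet.Aux2

variable {n k : ℕ} {U : Set (Jet n k)} {v0 : Jet n k → ℝ} {vi : Jet n k → Fin n → ℝ}

/-- The characteristic `φ_j = v^j − y^j_(1) v⁰`. -/
def phiF (v0 : Jet n k → ℝ) (vi : Jet n k → Fin n → ℝ) (j : Fin n) : Jet n k → ℝ :=
  fun z => vi z j - z.2 1 j * v0 z

lemma phiF_contDiffOn (hv0 : ContDiffOn ℝ (⊤ : ℕ∞) v0 U) (hvi : ContDiffOn ℝ (⊤ : ℕ∞) vi U)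
    (j : Fin n) : ContDiffOn ℝ (⊤ : ℕ∞) (phiF v0 vi j) U := by
  have h1 : ContDiffOn ℝ (⊤ : ℕ∞) (fun z : Jet n k => vi z j) U := contDiffOn_pi.1 hvi j
  have h2 : ContDiffOn ℝ (⊤ : ℕ∞) (fun z : Jet n k => z.2 1 j) U :=
    (coY n k 1 j).contDiff.contDiffOn
  exact h1.sub (h2.mul hv0)

lemma Xv_contDiffOn (hU : IsOpen U) (hv0 : ContDiffOn ℝ (⊤ : ℕ∞) v0 U) (hvi : ContDiffOn ℝ (⊤ : ℕ∞) vi U) :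
    ContDiffOn ℝ (⊤ : ℕ∞) (Xv v0 vi) U := by
  apply ContDiffOn.add
  · exact hv0.smul contDiff_dtVF.contDiffOn
  · apply ContDiffOn.sum; intro a _
    apply ContDiffOn.sum; intro i _
    exact (tderiv_iter_contDiffOn hU (phiF_contDiffOn hv0 hvi i) (a : ℕ)).smul contDiffOn_const

lemma coY_fderiv (a : Fin (k+1)) (i : Fin n) (u : Jet n k) :
    fderiv ℝ (fun w : Jet n k => w.2 a i) u = coY n k a i :=
  (coY n k a i).fderiv

lemma constraintB (hU : IsOpen U) (hv0 : ContDiffOn ℝ (⊤ : ℕ∞) v0 U) (hvi : ContDiffOn ℝ (⊤ : ℕ∞) vi U)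
    (hD : IsDSymm (Xv v0 vi) U) (i : Fin n) (b : Fin (k+1)) (hb : (b:ℕ) < k) (j : Fin n)
    {u : Jet n k} (hu : u ∈ U) :
    fderiv ℝ (tderiv^[(b:ℕ)] (phiF v0 vi j)) u (eY n k (Fin.last k) i)
      = if (b:ℕ) = k - 1 ∧ j = i then -(v0 u) else 0 := by
  set E := eY n k (Fin.last k) i with hE
  have hXd : DifferentiableAt ℝ (Xv v0 vi) u := diffAt hU (Xv_contDiffOn hU hv0 hvi) hu
  have hlie : InD u (lie (Xv v0 vi) (fun _ => E) u) :=
    hD (fun _ => E) contDiffOn_const (fun w _ => eY_mem_InD w i) u hu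
  have hlie_eq : lie (Xv v0 vi) (fun _ => E) u = -(fderiv ℝ (Xv v0 vi) u E) := by
    rw [lie, fderiv_fun_const]
    simp
  have hz : InD u (fderiv ℝ (Xv v0 vi) u E) := by
    have := InD_neg hlie
    rwa [hlie_eq, neg_neg] at this
  set z := fderiv ℝ (Xv v0 vi) u E with hzdef
  have hcomp := InD_snd hz b hb j
  have hz1 : z.1 = fderiv ℝ v0 u E := by
    have h1 : (fun w => coT n k (Xv v0 vi w)) = v0 := funext fun w => Xv_fst v0 vi w
    calc z.1 = coT n k z := rfl
      _ = fderiv ℝ (fun w => coT n k (Xv v0 vi w)) u E := (fderiv_comp_clm (coT n k) hXd E).symm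
      _ = fderiv ℝ v0 u E := by rw [h1]
  have hfun : (fun w => (Xv v0 vi w).2 b j)
      = fun w => v0 w * w.2 ⟨(b:ℕ)+1, by omega⟩ j + tderiv^[(b:ℕ)] (phiF v0 vi j) w :=
    funext fun w => Xv_snd v0 vi w b hb j
  have hz2 : z.2 b j = fderiv ℝ (fun w => (Xv v0 vi w).2 b j) u E := by
    calc z.2 b j = coY n k b j z := rfl
      _ = fderiv ℝ (fun w => coY n k b j (Xv v0 vi w)) u E :=
          (fderiv_comp_clm (coY n k b j) hXd E).symm
      _ = _ := rfl
  have hv0d : DifferentiableAt ℝ v0 u := diffAt hU hv0 hu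
  have hcoord : DifferentiableAt ℝ (fun w : Jet n k => w.2 ⟨(b:ℕ)+1, by omega⟩ j) u :=
    (coY n k ⟨(b:ℕ)+1, by omega⟩ j).differentiableAt
  have hTd : DifferentiableAt ℝ (tderiv^[(b:ℕ)] (phiF v0 vi j)) u :=
    diffAt hU (tderiv_iter_contDiffOn hU (phiF_contDiffOn hv0 hvi j) (b:ℕ)) hu
  rw [hfun] at hz2
  rw [fderiv_fun_add (hv0d.fun_mul hcoord) hTd] at hz2
  rw [fderiv_fun_mul hv0d hcoord] at hz2
  rw [coY_fderiv] at hz2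
  have hEcomp : coY n k ⟨(b:ℕ)+1, by omega⟩ j E = if (b:ℕ) = k - 1 ∧ j = i then 1 else 0 := by
    rw [hE, coY_apply, eY_snd]
    by_cases hc : (b:ℕ) = k - 1 ∧ j = i
    · rw [if_pos hc, if_pos ⟨Fin.ext (by simp [Fin.val_last]; omega), hc.2⟩]
    · rw [if_neg hc, if_neg]
      intro hcc
      apply hc
      refine ⟨?_, hcc.2⟩
      have := congrArg Fin.val hcc.1
      simp only [Fin.val_last] at this
      omega
  simp only [ContinuousLinearMap.add_apply, ContinuousLinearMap.smul_apply, smul_eq_mul,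
    hEcomp] at hz2
  rw [hcomp, hz1] at hz2
  -- hz2 : fderiv v0 u E * u.2 ⟨b+1⟩ j = (v0 u * δ + u.2 ⟨b+1⟩ j * fderiv v0 u E) + fderiv T^b φ u E
  by_cases hc : (b:ℕ) = k - 1 ∧ j = i
  · rw [if_pos hc] at hz2 ⊢; linarith
  · rw [if_neg hc] at hz2 ⊢; linarith

lemma commutator (hU : IsOpen U) {f : Jet n k → ℝ} (hf : ContDiffOn ℝ (⊤ : ℕ∞) f U)
    (a : ℕ) (ha : 1 ≤ a) (hak : a ≤ k) (j : Fin n) {u : Jet n k} (hu : u ∈ U) :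
    fderiv ℝ (tderiv f) u (eY n k ⟨a, by omega⟩ j)
      = tderiv (fun w => fderiv ℝ f w (eY n k ⟨a, by omega⟩ j)) u
        + fderiv ℝ f u (eY n k ⟨a - 1, by omega⟩ j) := by
  have hΦ : ContDiffOn ℝ (⊤ : ℕ∞) (fderiv ℝ f) U := hf.fderiv_of_isOpen hU (by simp)
  have hΦd : DifferentiableAt ℝ (fderiv ℝ f) u := diffAt hU hΦ hu
  have hdt : DifferentiableAt ℝ (dtVF n k) u := (hasFDerivAt_dtVF u).differentiableAt
  have h1 : fderiv ℝ (tderiv f) u = (fderiv ℝ f u).comp (shiftL n k)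
      + (fderiv ℝ (fderiv ℝ f) u).flip (dtVF n k u) := by
    have h := fderiv_clm_apply hΦd hdt
    rw [(hasFDerivAt_dtVF u).fderiv] at h
    exact h
  calc fderiv ℝ (tderiv f) u (eY n k ⟨a, by omega⟩ j)
      = fderiv ℝ f u (shiftL n k (eY n k ⟨a, by omega⟩ j))
        + fderiv ℝ (fderiv ℝ f) u (eY n k ⟨a, by omega⟩ j) (dtVF n k u) := by rw [h1]; rfl
    _ = fderiv ℝ f u (eY n k ⟨a - 1, by omega⟩ j)
        + fderiv ℝ (fderiv ℝ f) u (dtVF n k u) (eY n k ⟨a, by omega⟩ j) := by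
        rw [shiftL_eY a ha hak j, sndFDeriv_symm hU hf hu]
    _ = tderiv (fun w => fderiv ℝ f w (eY n k ⟨a, by omega⟩ j)) u
        + fderiv ℝ f u (eY n k ⟨a - 1, by omega⟩ j) := by
        rw [add_comm]
        congr 1
        rw [show tderiv (fun w => fderiv ℝ f w (eY n k ⟨a, by omega⟩ j)) u
            = fderiv ℝ (fun w => fderiv ℝ f w (eY n k ⟨a, by omega⟩ j)) u (dtVF n k u) from rfl,
          fderiv_clm_apply_const hΦd]

lemma tderiv_of_eqOn_zero (hU : IsOpen U) {g : Jet n k → ℝ} (hg : ∀ w ∈ U, g w = 0)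
    {u : Jet n k} (hu : u ∈ U) : tderiv g u = 0 := by
  have h : g =ᶠ[nhds u] (fun _ => (0:ℝ)) :=
    Filter.eventuallyEq_of_mem (hU.mem_nhds hu) hg
  rw [tderiv, h.fderiv_eq, fderiv_fun_const]
  rfl

lemma descent (hU : IsOpen U) (hv0 : ContDiffOn ℝ (⊤ : ℕ∞) v0 U) (hvi : ContDiffOn ℝ (⊤ : ℕ∞) vi U)
    (hD : IsDSymm (Xv v0 vi) U) (hk : 1 ≤ k) (j : Fin n) :
    ∀ m : ℕ, m ≤ k - 1 → ∀ b : ℕ, b ≤ (k - m) - 1 → ∀ u ∈ U,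
      fderiv ℝ (tderiv^[b] (phiF v0 vi j)) u (eY n k ⟨k - m, by omega⟩ j)
        = if b = (k - m) - 1 then -(v0 u) else 0 := by
  intro m
  induction m with
  | zero =>
    intro _ b hb u hu
    have h := constraintB hU hv0 hvi hD j ⟨b, by omega⟩ (by simpa using (by omega : b < k)) j hu
    have hEq : (⟨k - 0, by omega⟩ : Fin (k+1)) = Fin.last k := Fin.ext (by simp [Fin.val_last])
    rw [hEq]
    simpa using h
  | succ m ih =>
    intro hm b hb u hu
    have hm' : m ≤ k - 1 := by omega
    have ha1 : 1 ≤ k - m := by omega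
    have hak : k - m ≤ k := by omega
    have hcomm := commutator hU
      (tderiv_iter_contDiffOn hU (phiF_contDiffOn hv0 hvi j) b)
      (k - m) ha1 hak j hu
    have hLHS : fderiv ℝ (tderiv (tderiv^[b] (phiF v0 vi j))) u (eY n k ⟨k - m, by omega⟩ j)
        = if b + 1 = (k - m) - 1 then -(v0 u) else 0 := by
      have h := ih hm' (b+1) (by omega) u hu
      rwa [Function.iterate_succ_apply'] at h
    have hmid : tderiv (fun w => fderiv ℝ (tderiv^[b] (phiF v0 vi j)) w
        (eY n k ⟨k - m, by omega⟩ j)) u = 0 := by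
      apply tderiv_of_eqOn_zero hU _ hu
      intro w hw
      have := ih hm' b (by omega) w hw
      rwa [if_neg (by omega)] at this
    rw [hLHS, hmid, zero_add] at hcomm
    have hidx : (⟨k - m - 1, by omega⟩ : Fin (k+1)) = ⟨k - (m+1), by omega⟩ :=
      Fin.ext (by simp; omega)
    rw [hidx] at hcomm
    rw [← hcomm]
    by_cases hc : b = k - (m+1) - 1
    · rw [if_pos (by omega), if_pos hc]
    · rw [if_neg (by omega), if_neg hc]

lemma rho_zero (hn : 2 ≤ n) (hk : 1 ≤ k) (hU : IsOpen U) (hv0 : ContDiffOn ℝ (⊤ : ℕ∞) v0 U)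
    (hvi : ContDiffOn ℝ (⊤ : ℕ∞) vi U) (hD : IsDSymm (Xv v0 vi) U) {u : Jet n k} (hu : u ∈ U)
    (i : Fin n) : fderiv ℝ v0 u (eY n k (Fin.last k) i) = 0 := by
  obtain ⟨j, hij⟩ : ∃ j : Fin n, j ≠ i := by
    rcases eq_or_ne i ⟨0, by omega⟩ with h | h
    · exact ⟨⟨1, by omega⟩, by rw [h]; exact Fin.ne_of_val_ne (by simp)⟩
    · exact ⟨⟨0, by omega⟩, fun hc => h (hc ▸ rfl)⟩
  have hφ : ContDiffOn ℝ (⊤ : ℕ∞) (phiF v0 vi j) U := phiF_contDiffOn hv0 hvi j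
  have F1 : ∀ w ∈ U, fderiv ℝ (phiF v0 vi j) w (eY n k (Fin.last k) i) = 0 := by
    intro w hw
    have h := constraintB hU hv0 hvi hD i ⟨0, by omega⟩ (by show 0 < k; omega) j hw
    rw [if_neg (fun hc => hij hc.2)] at h
    simpa using h
  have F2 : ∀ w ∈ U, fderiv ℝ (phiF v0 vi j) w (eY n k ⟨1, by omega⟩ j) = -(v0 w) := by
    intro w hw
    have h := descent hU hv0 hvi hD hk j (k - 1) le_rfl 0 (by omega) w hw
    have hidx : (⟨k - (k-1), by omega⟩ : Fin (k+1)) = ⟨1, by omega⟩ := Fin.ext (by simp; omega)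
    rw [hidx, if_pos (by omega)] at h
    simpa using h
  have hΦd : DifferentiableAt ℝ (fderiv ℝ (phiF v0 vi j)) u :=
    diffAt hU (hφ.fderiv_of_isOpen hU (by simp)) hu
  have h1 : fderiv ℝ (fun w => fderiv ℝ (phiF v0 vi j) w (eY n k (Fin.last k) i)) u
      (eY n k ⟨1, by omega⟩ j) = 0 := by
    have h : (fun w => fderiv ℝ (phiF v0 vi j) w (eY n k (Fin.last k) i))
        =ᶠ[nhds u] (fun _ => (0:ℝ)) := Filter.eventuallyEq_of_mem (hU.mem_nhds hu) F1
    rw [h.fderiv_eq, fderiv_fun_const]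
    rfl
  have h2 : fderiv ℝ (fun w => fderiv ℝ (phiF v0 vi j) w (eY n k ⟨1, by omega⟩ j)) u
      (eY n k (Fin.last k) i)
      = fderiv ℝ (fun w => -(v0 w)) u (eY n k (Fin.last k) i) := by
    have h : (fun w => fderiv ℝ (phiF v0 vi j) w (eY n k ⟨1, by omega⟩ j))
        =ᶠ[nhds u] (fun w => -(v0 w)) := Filter.eventuallyEq_of_mem (hU.mem_nhds hu) F2
    rw [h.fderiv_eq]
  rw [fderiv_clm_apply_const hΦd] at h1 h2
  rw [sndFDeriv_symm hU hφ hu] at h1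
  rw [h1] at h2
  have hv0d : DifferentiableAt ℝ v0 u := diffAt hU hv0 hu
  rw [fderiv_fun_neg] at h2
  simpa using h2.symm

end Aux3
end Jet

namespace Jet
namespace Aux4
open Jet.Aux Jet.Aux2 Jet.Aux3

variable {n k : ℕ} {U : Set (Jet n k)} {v0 : Jet n k → ℝ} {vi : Jet n k → Fin n → ℝ}

lemma fderiv_Xv_mem (hU : IsOpen U) (hv0 : ContDiffOn ℝ (⊤ : ℕ∞) v0 U) (hvi : ContDiffOn ℝ (⊤ : ℕ∞) vi U)
    (hD : IsDSymm (Xv v0 vi) U) {u : Jet n k} (hu : u ∈ U) (i : Fin n) :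
    InD u (fderiv ℝ (Xv v0 vi) u (eY n k (Fin.last k) i)) := by
  have hlie : InD u (lie (Xv v0 vi) (fun _ => eY n k (Fin.last k) i) u) :=
    hD (fun _ => eY n k (Fin.last k) i) contDiffOn_const (fun w _ => eY_mem_InD w i) u hu
  have hlie_eq : lie (Xv v0 vi) (fun _ => eY n k (Fin.last k) i) u
      = -(fderiv ℝ (Xv v0 vi) u (eY n k (Fin.last k) i)) := by
    rw [lie, fderiv_fun_const]; simp
  have h := InD_neg hlie
  rwa [hlie_eq, neg_neg] at h

lemma fderiv_Xv_fst (hU : IsOpen U) (hv0 : ContDiffOn ℝ (⊤ : ℕ∞) v0 U) (hvi : ContDiffOn ℝ (⊤ : ℕ∞) vi U)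
    {u : Jet n k} (hu : u ∈ U) (i : Fin n) :
    (fderiv ℝ (Xv v0 vi) u (eY n k (Fin.last k) i)).1
      = fderiv ℝ v0 u (eY n k (Fin.last k) i) := by
  have hXd : DifferentiableAt ℝ (Xv v0 vi) u := diffAt hU (Xv_contDiffOn hU hv0 hvi) hu
  have h1 : (fun w => coT n k (Xv v0 vi w)) = v0 := funext fun w => Xv_fst v0 vi w
  calc (fderiv ℝ (Xv v0 vi) u (eY n k (Fin.last k) i)).1
      = coT n k (fderiv ℝ (Xv v0 vi) u (eY n k (Fin.last k) i)) := rfl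
    _ = fderiv ℝ (fun w => coT n k (Xv v0 vi w)) u (eY n k (Fin.last k) i) :=
        (fderiv_comp_clm (coT n k) hXd _).symm
    _ = fderiv ℝ v0 u (eY n k (Fin.last k) i) := by rw [h1]

lemma projL_eY_last (hk : 1 ≤ k) (i : Fin n) :
    projL n (show k - 1 ≤ k by omega) (eY n k (Fin.last k) i) = 0 := by
  refine Prod.ext rfl ?_
  funext b j
  show (eY n k (Fin.last k) i).2 (Fin.castLE (Nat.succ_le_succ (by omega)) b) j = 0
  rw [eY_snd, if_neg]
  intro hc
  have := congrArg Fin.val hc.1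
  simp only [Fin.coe_castLE, Fin.val_last] at this
  omega

lemma eY_last_snd_zero (hk : 1 ≤ k) (i : Fin n) :
    (eY n k (Fin.last k) i).2 0 = 0 := by
  funext j
  show (eY n k (Fin.last k) i).2 0 j = 0
  rw [eY_snd, if_neg]
  intro hc
  have := congrArg Fin.val hc.1
  simp only [Fin.val_last, Fin.val_zero] at this
  omega

end Aux4
end Jet
/-- Let `α_o` be a 1-form of Poincaré–Cartan type of order `≤ k−1` on `U`,
`σ` a source form with `dα_o − σ` holonomic, and `X_v` a `D`-symmetry on `U`. Then `X_v` is
an infinitesimal symmetry for the action of `α_o` iff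
`(d/dt)(α_o(X_v)) = σ(d/dt, X_v)` on `U`. -/
theorem stmt8 (n k : ℕ) (hn : 2 ≤ n) (hk : 1 ≤ k)
    (U : Set (Jet n k)) (hU : IsOpen U)
    (αo : Jet.Form1 n k) (hαo : ContDiffOn ℝ (⊤ : ℕ∞) αo U)
    (hord : ∃ β : Jet.Form1 n (k - 1), αo = Jet.pull1 n (show k - 1 ≤ k by omega) β)
    (σ : Jet.Form2 n k) (hσsm : ContDiffOn ℝ (⊤ : ℕ∞) σ U)
    (hsrc : Jet.SourceForm σ U)
    (hhol : Jet.Hol2 (fun u => Jet.extd αo u - σ u) U)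
    (v0 : Jet n k → ℝ) (vi : Jet n k → Fin n → ℝ)
    (hv0 : ContDiffOn ℝ (⊤ : ℕ∞) v0 U) (hvi : ContDiffOn ℝ (⊤ : ℕ∞) vi U)
    (hD : Jet.IsDSymm (Jet.Xv v0 vi) U) :
    Jet.IsSymm αo (Jet.Xv v0 vi) U ↔
      ∀ u ∈ U,
        Jet.tderiv (fun w => αo w (Jet.Xv v0 vi w)) u
          = σ u (Jet.dtVF n k u) (Jet.Xv v0 vi u) := by
  classical
  obtain ⟨β, hβ⟩ := hord
  have hXsm : ContDiffOn ℝ (⊤ : ℕ∞) (Jet.Xv v0 vi) U := Jet.Aux3.Xv_contDiffOn hU hv0 hvi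
  -- `αo` kills the top vertical directions
  have hα_eY : ∀ (u : Jet n k) (l : Fin n), αo u (Jet.eY n k (Fin.last k) l) = 0 := by
    intro u l
    rw [hβ]
    simp only [Jet.pull1, ContinuousLinearMap.coe_comp', Function.comp_apply]
    rw [Jet.Aux4.projL_eY_last hk l, map_zero]
  have hfα_eY : ∀ u ∈ U, ∀ l : Fin n,
      fderiv ℝ αo u (Jet.eY n k (Fin.last k) l) = 0 := by
    intro u hu l
    have hconst : (fun t : ℝ => αo (u + t • Jet.eY n k (Fin.last k) l)) = fun _ => αo u := by
      funext t
      rw [hβ]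
      have hproj : Jet.projL n (show k - 1 ≤ k by omega)
          (u + t • Jet.eY n k (Fin.last k) l) = Jet.projL n (show k - 1 ≤ k by omega) u := by
        rw [map_add, map_smul, Jet.Aux4.projL_eY_last hk l, smul_zero, add_zero]
      simp only [Jet.pull1, hproj]
    have hαd : DifferentiableAt ℝ αo u := Jet.Aux2.diffAt hU hαo hu
    have h := hαd.lineDeriv_eq_fderiv (v := Jet.eY n k (Fin.last k) l)
    rw [← h]
    show deriv (fun t : ℝ => αo (u + t • Jet.eY n k (Fin.last k) l)) 0 = 0
    rw [hconst, deriv_const]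
  set X := Jet.Xv v0 vi with hX
  -- Cartan-type decomposition of the Lie derivative
  have key : ∀ u ∈ U, ∀ z, Jet.lieD X αo u z
      = fderiv ℝ (fun w => αo w (X w)) u z + Jet.extd αo u (X u) z := by
    intro u hu z
    have hαd : DifferentiableAt ℝ αo u := Jet.Aux2.diffAt hU hαo hu
    have hXd : DifferentiableAt ℝ X u := Jet.Aux2.diffAt hU hXsm hu
    rw [fderiv_clm_apply hαd hXd]
    simp only [Jet.lieD, Jet.extd, ContinuousLinearMap.add_apply, ContinuousLinearMap.coe_comp',
      Function.comp_apply, ContinuousLinearMap.sub_apply, ContinuousLinearMap.flip_apply]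
    ring
  have hhol' : ∀ u ∈ U, ∀ v, Jet.InD u v → Jet.extd αo u v = σ u v := by
    intro u hu v hv
    have h := hhol u hu v hv
    rwa [ContinuousLinearMap.sub_apply, sub_eq_zero] at h
  have hasym : ∀ (u w z : Jet n k), Jet.extd αo u w z = -(Jet.extd αo u z w) := by
    intro u w z
    simp only [Jet.extd, ContinuousLinearMap.sub_apply, ContinuousLinearMap.flip_apply]
    ring
  have keyDT : ∀ u ∈ U, Jet.lieD X αo u (Jet.dtVF n k u)
      = Jet.tderiv (fun w => αo w (X w)) u - σ u (Jet.dtVF n k u) (X u) := by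
    intro u hu
    rw [key u hu, hasym, hhol' u hu _ (Jet.Aux2.dt_mem_InD u)]
    show fderiv ℝ (fun w => αo w (X w)) u (Jet.dtVF n k u) + _
        = fderiv ℝ (fun w => αo w (X w)) u (Jet.dtVF n k u) - _
    ring
  have keyE : ∀ u ∈ U, ∀ i : Fin n, Jet.lieD X αo u (Jet.eY n k (Fin.last k) i) = 0 := by
    intro u hu i
    have hαd : DifferentiableAt ℝ αo u := Jet.Aux2.diffAt hU hαo hu
    have hXd : DifferentiableAt ℝ X u := Jet.Aux2.diffAt hU hXsm hu
    rw [key u hu, hasym, hhol' u hu _ (Jet.Aux2.eY_mem_InD u i)]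
    have hσ0 : σ u (Jet.eY n k (Fin.last k) i) = 0 :=
      hsrc.2 u hu _ (Jet.Aux.eY_fst _ _) (Jet.Aux4.eY_last_snd_zero hk i)
    rw [hσ0]
    have hg0 : fderiv ℝ (fun w => αo w (X w)) u (Jet.eY n k (Fin.last k) i) = 0 := by
      rw [fderiv_clm_apply hαd hXd]
      simp only [ContinuousLinearMap.add_apply, ContinuousLinearMap.coe_comp',
        Function.comp_apply, ContinuousLinearMap.flip_apply]
      rw [hfα_eY u hu i, ContinuousLinearMap.zero_apply]
      obtain ⟨c, w, hzeq⟩ := Jet.Aux4.fderiv_Xv_mem hU hv0 hvi hD hu i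
      have hc : c = 0 := by
        have h1 := Jet.Aux4.fderiv_Xv_fst hU hv0 hvi hu i
        have h2 := Jet.Aux2.D_fst u c w
        rw [← hzeq] at h2
        rw [← h2, h1, Jet.Aux3.rho_zero hn hk hU hv0 hvi hD hu i]
      rw [hzeq, hc, zero_smul, zero_add, map_sum]
      simp only [map_smul, smul_eq_mul, hα_eY u, mul_zero, Finset.sum_const_zero, add_zero]
    rw [hg0]
    simp
  constructor
  · intro hsym u hu
    have h := hsym.2 u hu (Jet.dtVF n k u) (Jet.Aux2.dt_mem_InD u)
    rw [keyDT u hu] at h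
    exact sub_eq_zero.1 h
  · intro heq
    refine ⟨hD, ?_⟩
    intro u hu v hv
    obtain ⟨c, w, rfl⟩ := hv
    have hDT0 : Jet.lieD X αo u (Jet.dtVF n k u) = 0 := by
      rw [keyDT u hu, heq u hu, sub_self]
    rw [map_add, map_smul, map_sum]
    simp only [map_smul, hDT0, keyE u hu, smul_eq_mul, mul_zero, smul_zero,
      Finset.sum_const_zero, add_zero]
end
end
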